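/- arXiv:2104.03377 — 2 statements merged into one kernel-verified Lean document; each statement's English description precedes it below -/
import Mathlib

section
/- If an Archimedean vector lattice E has only finitely many minimal prime ideals, then E is finite-dimensional. -/
/-- An (order) ideal of the vector lattice `E`: a solid linear subspace. -/
def IsIdeal {E : Type*} [Lattice E] [AddCommGroup E] [Module ℝ E]
    (I : Submodule ℝ E) : Prop :=
  ∀ x y : E, |x| ≤ |y| → y ∈ I → x ∈ I

/-- A prime ideal: a proper ideal `P` such that `x ⊓ y ∈ P` implies `x ∈ P` or `y ∈ P`. -/
def IsPrimeIdeal {E : Type*} [Lattice E] [AddCommGroup E] [Module ℝ E]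
    (P : Submodule ℝ E) : Prop :=
  IsIdeal P ∧ P ≠ ⊤ ∧ ∀ x y : E, x ⊓ y ∈ P → x ∈ P ∨ y ∈ P

/-- A principal ideal: `I = {y : |y| ≤ c • x for some scalar c ≥ 0}` for some `x ≥ 0`. -/
def IsPrincipalIdeal {E : Type*} [Lattice E] [AddCommGroup E] [Module ℝ E]
    (I : Submodule ℝ E) : Prop :=
  ∃ x : E, 0 ≤ x ∧ ∀ y : E, y ∈ I ↔ ∃ c : ℝ, 0 ≤ c ∧ |y| ≤ c • x

/-- A maximal ideal: a proper ideal `M` such that any ideal between `M` and `E` equals `M` or `E`. -/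
def IsMaximalIdeal {E : Type*} [Lattice E] [AddCommGroup E] [Module ℝ E]
    (M : Submodule ℝ E) : Prop :=
  IsIdeal M ∧ M ≠ ⊤ ∧ ∀ J : Submodule ℝ E, IsIdeal J → M ≤ J → J = M ∨ J = ⊤

/-- An ideal `I` is order dense if its disjoint complement is trivial. -/
def IsOrderDense {E : Type*} [Lattice E] [AddCommGroup E] [Module ℝ E]
    (I : Submodule ℝ E) : Prop :=
  ∀ x : E, (∀ y ∈ I, |x| ⊓ |y| = 0) → x = 0

/-- `a` is an atom of the vector lattice `E`. -/
def IsAtomElem {E : Type*} [Lattice E] [AddCommGroup E] (a : E) : Prop :=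
  0 < a ∧ ∀ x y : E, 0 ≤ x → x ≤ a → 0 ≤ y → y ≤ a → x ⊓ y = 0 → x = 0 ∨ y = 0

/-- The vector lattice `E` is Archimedean. -/
def VLArchimedean (E : Type*) [Lattice E] [AddCommGroup E] : Prop :=
  ∀ x y : E, (∀ n : ℕ, n • x ≤ y) → x ≤ 0

/-- The vector lattice `E` is uniformly complete. -/
def UniformlyComplete (E : Type*) [Lattice E] [AddCommGroup E] [Module ℝ E] : Prop :=
  ∀ e : E, 0 ≤ e → ∀ x : ℕ → E,
    (∀ ε : ℝ, 0 < ε → ∃ N : ℕ, ∀ m n : ℕ, N ≤ m → N ≤ n → |x m - x n| ≤ ε • e) →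
    ∃ l : E, ∀ ε : ℝ, 0 < ε → ∃ N : ℕ, ∀ n : ℕ, N ≤ n → |x n - l| ≤ ε • e

/-- The vector lattice `E` has a strong unit. -/
def HasStrongUnit (E : Type*) [Lattice E] [AddCommGroup E] [Module ℝ E] : Prop :=
  ∃ e : E, 0 ≤ e ∧ ∀ x : E, ∃ c : ℝ, 0 < c ∧ |x| ≤ c • e

/-- The vector lattice `E` is prime Noetherian: every increasing sequence of
prime ideals is eventually constant. -/
def PrimeNoetherian (E : Type*) [Lattice E] [AddCommGroup E] [Module ℝ E] : Prop :=
  ∀ P : ℕ → Submodule ℝ E, (∀ n, IsPrimeIdeal (P n)) → Monotone P →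
    ∃ N : ℕ, ∀ n : ℕ, N ≤ n → P n = P N


/-- A minimal prime ideal: a prime ideal not strictly containing another prime ideal. -/
def IsMinimalPrimeIdeal {E : Type*} [Lattice E] [AddCommGroup E] [Module ℝ E]
    (P : Submodule ℝ E) : Prop :=
  IsPrimeIdeal P ∧ ∀ Q : Submodule ℝ E, IsPrimeIdeal Q → Q ≤ P → Q = P

section VLAux
set_option linter.unusedSectionVars false

variable {E : Type*} [Lattice E] [AddCommGroup E] [Module ℝ E]
variable [CovariantClass E E (· + ·) (· ≤ ·)] [PosSMulMono ℝ E]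

/-- Monotonicity in the scalar. -/
lemma vl_smul_le_smul {c d : ℝ} {x : E} (h : c ≤ d) (hx : 0 ≤ x) : c • x ≤ d • x := by
  have h0 : (0 : E) ≤ (d - c) • x := smul_nonneg (by linarith) hx
  have : c • x + 0 ≤ c • x + (d - c) • x := add_le_add_right h0 _
  calc c • x = c • x + 0 := by rw [add_zero]
    _ ≤ c • x + (d - c) • x := this
    _ = d • x := by rw [← add_smul]; ring_nf

lemma vl_abs_smul_le (r : ℝ) (y : E) : |r • y| ≤ |r| • |y| := by
  rw [abs_le']
  constructor
  · rcases le_or_gt 0 r with hr | hr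
    · calc r • y ≤ r • |y| := smul_le_smul_of_nonneg_left (le_abs_self y) hr
        _ ≤ |r| • |y| := vl_smul_le_smul (le_abs_self r) (abs_nonneg y)
    · calc r • y = (-r) • (-y) := by rw [neg_smul, smul_neg, neg_neg]
        _ ≤ (-r) • |y| := smul_le_smul_of_nonneg_left (neg_le_abs y) (by linarith)
        _ ≤ |r| • |y| := vl_smul_le_smul (neg_le_abs r) (abs_nonneg y)
  · rcases le_or_gt 0 r with hr | hr
    · calc -(r • y) = r • (-y) := by rw [smul_neg]
        _ ≤ r • |y| := smul_le_smul_of_nonneg_left (neg_le_abs y) hr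
        _ ≤ |r| • |y| := vl_smul_le_smul (le_abs_self r) (abs_nonneg y)
    · calc -(r • y) = (-r) • y := by rw [neg_smul]
        _ ≤ (-r) • |y| := smul_le_smul_of_nonneg_left (le_abs_self y) (by linarith)
        _ ≤ |r| • |y| := vl_smul_le_smul (neg_le_abs r) (abs_nonneg y)

/-- Nonnegative scalars distribute over `⊓`. -/
lemma vl_smul_inf {c : ℝ} (hc : 0 ≤ c) (a b : E) : c • (a ⊓ b) = (c • a) ⊓ (c • b) := by
  rcases eq_or_lt_of_le hc with rfl | hc
  · simp
  · apply le_antisymm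
    · exact le_inf (smul_le_smul_of_nonneg_left inf_le_left hc.le)
        (smul_le_smul_of_nonneg_left inf_le_right hc.le)
    · have h1 : c⁻¹ • ((c • a) ⊓ (c • b)) ≤ a ⊓ b := by
        apply le_inf
        · calc c⁻¹ • ((c • a) ⊓ (c • b)) ≤ c⁻¹ • (c • a) :=
            smul_le_smul_of_nonneg_left inf_le_left (by positivity)
            _ = a := by rw [smul_smul, inv_mul_cancel₀ hc.ne', one_smul]
        · calc c⁻¹ • ((c • a) ⊓ (c • b)) ≤ c⁻¹ • (c • b) :=
            smul_le_smul_of_nonneg_left inf_le_right (by positivity)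
            _ = b := by rw [smul_smul, inv_mul_cancel₀ hc.ne', one_smul]
      calc (c • a) ⊓ (c • b) = c • (c⁻¹ • ((c • a) ⊓ (c • b))) := by
            rw [smul_smul, mul_inv_cancel₀ hc.ne', one_smul]
        _ ≤ c • (a ⊓ b) := smul_le_smul_of_nonneg_left h1 hc.le

/-- Archimedean ε-lemma. -/
lemma vl_arch_eps (harch : VLArchimedean E) {d e : E} (he : 0 ≤ e)
    (h : ∀ ε : ℝ, 0 < ε → d ≤ ε • e) : d ≤ 0 := by
  apply harch d e
  intro n
  rcases Nat.eq_zero_or_pos n with rfl | hn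
  · simpa using he
  · have hnR : (0 : ℝ) < n := by exact_mod_cast hn
    have h1 : d ≤ ((n : ℝ)⁻¹) • e := h _ (by positivity)
    have h2 : (n : ℝ) • d ≤ (n : ℝ) • ((n : ℝ)⁻¹ • e) :=
      smul_le_smul_of_nonneg_left h1 hnR.le
    rw [smul_smul, mul_inv_cancel₀ hnR.ne', one_smul] at h2
    calc n • d = (n : ℝ) • d := (Nat.cast_smul_eq_nsmul ℝ n d).symm
      _ ≤ e := h2

/-- Subadditivity of the infimum with nonnegative elements. -/
lemma vl_inf_add_le {a b c : E} (ha : 0 ≤ a) (hb : 0 ≤ b) (hc : 0 ≤ c) :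
    a ⊓ (b + c) ≤ a ⊓ b + a ⊓ c := by
  set d := a ⊓ (b + c) with hd
  have key : d - a ⊓ b ≤ a ⊓ c := by
    have hsub : d - a ⊓ b = (d - a) ⊔ (d - b) := sub_inf a b d
    rw [hsub]
    apply sup_le
    · have h1 : d - a ≤ 0 := sub_nonpos.mpr inf_le_left
      exact le_trans h1 (le_inf ha hc)
    · apply le_inf
      · have : d ≤ a + b := le_trans inf_le_left (le_add_of_nonneg_right hb)
        exact sub_le_iff_le_add.mpr this
      · have : d ≤ b + c := inf_le_right
        exact sub_le_iff_le_add'.mpr this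
  exact sub_le_iff_le_add'.mp key



lemma vl_sum_nonneg {ι : Type*} {s : Finset ι} {f : ι → E} (h : ∀ i ∈ s, 0 ≤ f i) :
    (0 : E) ≤ ∑ i ∈ s, f i := by
  classical
  induction s using Finset.induction_on with
  | empty => simp
  | insert _ _ hj ih =>
    rename_i j t
    rw [Finset.sum_insert hj]
    exact add_nonneg (h j (Finset.mem_insert_self j t))
      (ih fun i hi => h i (Finset.mem_insert_of_mem hi))

lemma vl_sum_le_sum {ι : Type*} {s : Finset ι} {f g : ι → E} (h : ∀ i ∈ s, f i ≤ g i) :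
    ∑ i ∈ s, f i ≤ ∑ i ∈ s, g i := by
  classical
  induction s using Finset.induction_on with
  | empty => simp
  | insert _ _ hj ih =>
    rename_i j t
    rw [Finset.sum_insert hj, Finset.sum_insert hj]
    exact add_le_add (h j (Finset.mem_insert_self j t))
      (ih fun i hi => h i (Finset.mem_insert_of_mem hi))

lemma vl_single_le_sum {ι : Type*} {s : Finset ι} {f : ι → E} (h : ∀ i ∈ s, 0 ≤ f i)
    {j : ι} (hj : j ∈ s) : f j ≤ ∑ i ∈ s, f i := by
  classical
  have : ∑ i ∈ s, f i = f j + ∑ i ∈ s.erase j, f i := (Finset.add_sum_erase s f hj).symm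
  rw [this]
  exact le_add_of_nonneg_right (vl_sum_nonneg fun i hi => h i (Finset.mem_of_mem_erase hi))

/-- If `a` is disjoint from each summand, it is disjoint from the sum. -/
lemma vl_inf_sum_eq_zero {ι : Type*} {s : Finset ι} {f : ι → E} {a : E} (ha : 0 ≤ a)
    (hf : ∀ i ∈ s, 0 ≤ f i) (hd : ∀ i ∈ s, a ⊓ f i = 0) : a ⊓ (∑ i ∈ s, f i) = 0 := by
  classical
  induction s using Finset.induction_on with
  | empty => simpa using ha
  | insert _ _ hj ih =>
    rename_i j t
    rw [Finset.sum_insert hj]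
    have hsum0 : (0 : E) ≤ ∑ i ∈ t, f i :=
      vl_sum_nonneg fun i hi => hf i (Finset.mem_insert_of_mem hi)
    have h1 : a ⊓ (f j + ∑ i ∈ t, f i) ≤ a ⊓ f j + a ⊓ (∑ i ∈ t, f i) :=
      vl_inf_add_le ha (hf j (Finset.mem_insert_self j t)) hsum0
    have h2 : a ⊓ f j = 0 := hd j (Finset.mem_insert_self j t)
    have h3 : a ⊓ (∑ i ∈ t, f i) = 0 :=
      ih (fun i hi => hf i (Finset.mem_insert_of_mem hi))
        (fun i hi => hd i (Finset.mem_insert_of_mem hi))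
    apply le_antisymm
    · rw [h2, h3] at h1; simpa using h1
    · exact le_inf ha (add_nonneg (hf j (Finset.mem_insert_self j t)) hsum0)

/-- A sum of pairwise disjoint nonnegative elements, each below `z`, is below `z`. -/
lemma vl_sum_le {ι : Type*} {s : Finset ι} {f : ι → E} {z : E} (hz : 0 ≤ z)
    (hf0 : ∀ i ∈ s, 0 ≤ f i) (hfz : ∀ i ∈ s, f i ≤ z)
    (hd : ∀ i ∈ s, ∀ j ∈ s, i ≠ j → f i ⊓ f j = 0) : ∑ i ∈ s, f i ≤ z := by
  classical
  induction s using Finset.induction_on with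
  | empty => simpa using hz
  | insert _ _ hj ih =>
    rename_i j t
    rw [Finset.sum_insert hj]
    have hdisj : f j ⊓ (∑ i ∈ t, f i) = 0 := by
      apply vl_inf_sum_eq_zero (hf0 j (Finset.mem_insert_self j t))
        (fun i hi => hf0 i (Finset.mem_insert_of_mem hi))
      intro i hi
      exact hd j (Finset.mem_insert_self j t) i (Finset.mem_insert_of_mem hi)
        (fun h => hj (h ▸ hi))
    have hkey : f j + ∑ i ∈ t, f i = f j ⊔ (∑ i ∈ t, f i) := by
      have := inf_add_sup (f j) (∑ i ∈ t, f i)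
      rw [hdisj, zero_add] at this
      exact this.symm
    rw [hkey]
    exact sup_le (hfz j (Finset.mem_insert_self j t))
      (ih (fun i hi => hf0 i (Finset.mem_insert_of_mem hi))
        (fun i hi => hfz i (Finset.mem_insert_of_mem hi))
        (fun i hi k hk hik => hd i (Finset.mem_insert_of_mem hi) k
          (Finset.mem_insert_of_mem hk) hik))

/-- Membership of the absolute value in an ideal. -/
lemma IsIdeal.abs_mem {I : Submodule ℝ E} (hI : IsIdeal I) {x : E} (hx : x ∈ I) : |x| ∈ I :=
  hI |x| x (by rw [abs_abs]) hx

lemma IsIdeal.mem_of_abs_mem {I : Submodule ℝ E} (hI : IsIdeal I) {x : E} (hx : |x| ∈ I) :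
    x ∈ I :=
  hI x |x| (by rw [abs_abs]) hx

/-- Primes are closed under "neither member" intersections. -/
lemma vl_inf_not_mem {P : Submodule ℝ E} (hP : IsPrimeIdeal P) {x y : E}
    (hx : x ∉ P) (hy : y ∉ P) : x ⊓ y ∉ P := fun h => by
  rcases hP.2.2 x y h with h' | h' <;> [exact hx h'; exact hy h']

set_option maxHeartbeats 1000000 in
/-- The ideal generated by an ideal `M` and an element `a`. -/
def vl_genIdeal (M : Submodule ℝ E) (a : E) : Submodule ℝ E where
  carrier := {y | ∃ m ∈ M, 0 ≤ m ∧ ∃ c : ℝ, 0 ≤ c ∧ |y| ≤ m + c • a}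
  zero_mem' := ⟨0, M.zero_mem, le_rfl, 0, le_rfl, by simp⟩
  add_mem' := by
    rintro y₁ y₂ ⟨m₁, hm₁, hm₁0, c₁, hc₁, h₁⟩ ⟨m₂, hm₂, hm₂0, c₂, hc₂, h₂⟩
    refine ⟨m₁ + m₂, M.add_mem hm₁ hm₂, add_nonneg hm₁0 hm₂0, c₁ + c₂, by linarith, ?_⟩
    calc |y₁ + y₂| ≤ |y₁| + |y₂| := abs_add_le _ _
      _ ≤ (m₁ + c₁ • a) + (m₂ + c₂ • a) := add_le_add h₁ h₂
      _ = (m₁ + m₂) + (c₁ + c₂) • a := by rw [add_smul]; abel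
  smul_mem' := by
    rintro r y ⟨m, hm, hm0, c, hc, h⟩
    refine ⟨|r| • m, M.smul_mem _ hm, smul_nonneg (abs_nonneg r) hm0, |r| * c,
      by positivity, ?_⟩
    calc |r • y| ≤ |r| • |y| := vl_abs_smul_le r y
      _ ≤ |r| • (m + c • a) := smul_le_smul_of_nonneg_left h (abs_nonneg r)
      _ = |r| • m + (|r| * c) • a := by rw [smul_add, smul_smul]

/-- There is a prime ideal avoiding `|z|`, for `z ≠ 0`. -/
lemma vl_exists_prime_avoiding {z : E} (hz : z ≠ 0) :
    ∃ M : Submodule ℝ E, IsPrimeIdeal M ∧ |z| ∉ M := by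
  classical
  set S : Set (Submodule ℝ E) := {I | IsIdeal I ∧ |z| ∉ I} with hS
  have hbot : (⊥ : Submodule ℝ E) ∈ S := by
    constructor
    · intro x y hxy hy
      rw [Submodule.mem_bot] at hy ⊢
      subst hy
      simp only [abs_zero] at hxy
      have h0 : |x| = 0 := le_antisymm hxy (abs_nonneg x)
      have h1 : x ≤ 0 := h0 ▸ le_abs_self x
      have h2 : -x ≤ 0 := h0 ▸ neg_le_abs x
      exact le_antisymm h1 (neg_nonpos.mp h2)
    · intro h
      rw [Submodule.mem_bot] at h
      have h1 : z ≤ 0 := h ▸ le_abs_self z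
      have h2 : -z ≤ 0 := h ▸ neg_le_abs z
      exact hz (le_antisymm h1 (neg_nonpos.mp h2))
  have hchainS : ∀ c ⊆ S, IsChain (· ≤ ·) c → ∀ y ∈ c,
      ∃ ub ∈ S, ∀ I ∈ c, I ≤ ub := by
    intro c hcS hchain y hy
    refine ⟨sSup c, ⟨?_, ?_⟩, fun I hI => le_sSup hI⟩
    · intro x' y' hxy hy'
      obtain ⟨I, hIc, hyI⟩ :=
        (Submodule.mem_sSup_of_directed ⟨y, hy⟩ hchain.directedOn).mp hy'
      exact le_sSup hIc ((hcS hIc).1 x' y' hxy hyI)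
    · intro h
      obtain ⟨I, hIc, hzI⟩ :=
        (Submodule.mem_sSup_of_directed ⟨y, hy⟩ hchain.directedOn).mp h
      exact (hcS hIc).2 hzI
  obtain ⟨M, -, hM⟩ := zorn_le_nonempty₀ S hchainS ⊥ hbot
  have hMid : IsIdeal M := hM.1.1
  have hMz : |z| ∉ M := hM.1.2
  -- primeness on nonnegative elements
  have hpos : ∀ p q : E, 0 ≤ p → 0 ≤ q → p ⊓ q ∈ M → p ∈ M ∨ q ∈ M := by
    intro p q hp hq hpq
    by_contra hcon
    push_neg at hcon
    obtain ⟨hpM, hqM⟩ := hcon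
    have hget : ∀ a : E, 0 ≤ a → a ∉ M →
        ∃ m ∈ M, 0 ≤ m ∧ ∃ c : ℝ, 0 ≤ c ∧ |z| ≤ m + c • a := by
      intro a ha haM
      by_contra hno
      have hgen : vl_genIdeal M a ∈ S := by
        constructor
        · intro x' y' hxy hy'
          obtain ⟨m, hm, hm0, c, hc, hle⟩ := hy'
          exact ⟨m, hm, hm0, c, hc, le_trans hxy hle⟩
        · intro hmem
          obtain ⟨m, hm, hm0, c, hc, hle⟩ := hmem
          exact hno ⟨m, hm, hm0, c, hc, by rwa [abs_abs] at hle⟩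
      have hle : M ≤ vl_genIdeal M a := by
        intro y hy
        exact ⟨|y|, hMid.abs_mem hy, abs_nonneg y, 0, le_rfl, by simp⟩
      have haGen : a ∈ vl_genIdeal M a :=
        ⟨0, M.zero_mem, le_rfl, 1, zero_le_one, by rw [abs_of_nonneg ha]; simp⟩
      exact haM ((hM.2 hgen hle) haGen)
    obtain ⟨m₁, hm₁, hm₁0, c₁, hc₁, h₁⟩ := hget p hp hpM
    obtain ⟨m₂, hm₂, hm₂0, c₂, hc₂, h₂⟩ := hget q hq hqM
    set c := max c₁ c₂ with hc
    have hc0 : 0 ≤ c := le_trans hc₁ (le_max_left _ _)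
    have h₁' : |z| ≤ m₁ + c • p :=
      h₁.trans (add_le_add_right (vl_smul_le_smul (le_max_left c₁ c₂) hp) m₁)
    have h₂' : |z| ≤ m₂ + c • q :=
      h₂.trans (add_le_add_right (vl_smul_le_smul (le_max_right c₁ c₂) hq) m₂)
    have key : |z| ≤ (m₁ + m₂) + c • (p ⊓ q) := by
      calc |z| ≤ (m₁ + c • p) ⊓ (m₂ + c • q) := le_inf h₁' h₂'
        _ ≤ ((m₁ + m₂) + c • p) ⊓ ((m₁ + m₂) + c • q) :=
          inf_le_inf (add_le_add_left (le_add_of_nonneg_right hm₂0) _)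
            (add_le_add_left (le_add_of_nonneg_left hm₁0) _)
        _ = (m₁ + m₂) + (c • p ⊓ c • q) := (add_inf _ _ _).symm
        _ = (m₁ + m₂) + c • (p ⊓ q) := by rw [vl_smul_inf hc0]
    have hmem : (m₁ + m₂) + c • (p ⊓ q) ∈ M :=
      M.add_mem (M.add_mem hm₁ hm₂) (M.smul_mem _ hpq)
    have hRHS0 : (0 : E) ≤ (m₁ + m₂) + c • (p ⊓ q) :=
      add_nonneg (add_nonneg hm₁0 hm₂0) (smul_nonneg hc0 (le_inf hp hq))
    exact hMz (hMid |z| _ (by rw [abs_abs, abs_of_nonneg hRHS0]; exact key) hmem)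
  have hMne : M ≠ ⊤ := fun h => hMz (h ▸ Submodule.mem_top)
  refine ⟨M, ⟨hMid, hMne, ?_⟩, hMz⟩
  intro x y hxy
  have hp : (0 : E) ≤ x - x ⊓ y := sub_nonneg.mpr inf_le_left
  have hq : (0 : E) ≤ y - x ⊓ y := sub_nonneg.mpr inf_le_right
  have hinf : (x - x ⊓ y) ⊓ (y - x ⊓ y) ∈ M := by
    have : (x - x ⊓ y) ⊓ (y - x ⊓ y) = (x ⊓ y) - (x ⊓ y) := (inf_sub _ _ _).symm
    rw [this, sub_self]
    exact M.zero_mem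
  rcases hpos _ _ hp hq hinf with h | h
  · left
    have := M.add_mem h hxy
    simpa using this
  · right
    have := M.add_mem h hxy
    simpa using this

/-- Below any prime ideal there is a minimal prime ideal. -/
lemma vl_exists_minimal_prime_le {M : Submodule ℝ E} (hM : IsPrimeIdeal M) :
    ∃ P : Submodule ℝ E, IsMinimalPrimeIdeal P ∧ P ≤ M := by
  classical
  set T : Set (Submodule ℝ E)ᵒᵈ :=
    {Q | IsPrimeIdeal (OrderDual.ofDual Q) ∧ OrderDual.ofDual Q ≤ M} with hT
  have hMT : OrderDual.toDual M ∈ T := ⟨hM, le_rfl⟩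
  have hchainT : ∀ c ⊆ T, IsChain (· ≤ ·) c → ∀ y ∈ c,
      ∃ ub ∈ T, ∀ Q ∈ c, Q ≤ ub := by
    intro c hcT hchain y hy
    set D : Set (Submodule ℝ E) := OrderDual.ofDual '' c with hD
    have hyD : OrderDual.ofDual y ∈ D := ⟨y, hy, rfl⟩
    have hprimeD : ∀ I ∈ D, IsPrimeIdeal I := by
      rintro I ⟨Q, hQ, rfl⟩
      exact (hcT hQ).1
    have hIdeal : IsIdeal (sInf D) := by
      intro x' y' hxy hy'
      rw [Submodule.mem_sInf] at hy' ⊢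
      intro I hI
      exact (hprimeD I hI).1 x' y' hxy (hy' I hI)
    have hleM : sInf D ≤ M := le_trans (sInf_le hyD) (hcT hy).2
    have hproper : sInf D ≠ ⊤ := by
      intro htop
      rw [htop] at hleM
      exact hM.2.1 (top_le_iff.mp hleM)
    have hprime : ∀ x y' : E, x ⊓ y' ∈ sInf D → x ∈ sInf D ∨ y' ∈ sInf D := by
      intro x y' hxy
      by_contra hcon
      push_neg at hcon
      obtain ⟨hx, hy'⟩ := hcon
      rw [Submodule.mem_sInf] at hx hy'
      push_neg at hx hy'
      obtain ⟨I₁, hI₁, hxI₁⟩ := hx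
      obtain ⟨I₂, hI₂, hyI₂⟩ := hy'
      have hm : ∀ I ∈ D, x ⊓ y' ∈ I := Submodule.mem_sInf.mp hxy
      obtain ⟨Q₁, hQ₁, rfl⟩ := hI₁
      obtain ⟨Q₂, hQ₂, rfl⟩ := hI₂
      rcases eq_or_ne Q₁ Q₂ with rfl | hne
      · rcases (hprimeD _ ⟨Q₁, hQ₁, rfl⟩).2.2 x y' (hm _ ⟨Q₁, hQ₁, rfl⟩) with h | h
        · exact hxI₁ h
        · exact hyI₂ h
      · rcases hchain hQ₁ hQ₂ hne with hle | hle
        · rcases (hprimeD _ ⟨Q₂, hQ₂, rfl⟩).2.2 x y' (hm _ ⟨Q₂, hQ₂, rfl⟩) with h | h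
          · exact hxI₁ (hle h)
          · exact hyI₂ h
        · rcases (hprimeD _ ⟨Q₁, hQ₁, rfl⟩).2.2 x y' (hm _ ⟨Q₁, hQ₁, rfl⟩) with h | h
          · exact hxI₁ h
          · exact hyI₂ (hle h)
    exact ⟨OrderDual.toDual (sInf D), ⟨⟨hIdeal, hproper, hprime⟩, hleM⟩,
      fun Q hQ => sInf_le (show OrderDual.ofDual Q ∈ D from ⟨Q, hQ, rfl⟩)⟩
  obtain ⟨P, -, hP⟩ := zorn_le_nonempty₀ T hchainT (OrderDual.toDual M) hMT
  refine ⟨OrderDual.ofDual P, ⟨hP.1.1, ?_⟩, hP.1.2⟩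
  intro Q hQ hQP
  have hQT : OrderDual.toDual Q ∈ T := ⟨hQ, le_trans hQP hP.1.2⟩
  have := hP.2 hQT hQP
  exact le_antisymm hQP this

/-- An element lying in every minimal prime ideal is zero. -/
lemma vl_eq_zero_of_mem_all {x : E}
    (h : ∀ P : Submodule ℝ E, IsMinimalPrimeIdeal P → x ∈ P) : x = 0 := by
  by_contra hx
  obtain ⟨M, hM, hzM⟩ := vl_exists_prime_avoiding hx
  obtain ⟨P, hPmin, hPM⟩ := vl_exists_minimal_prime_le hM
  exact hzM (hPM (hPmin.1.1.abs_mem (h P hPmin)))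

/-- Relative Hölder lemma: if `0 ≤ v ≤ u`, `u > 0`, and `v` is comparable with every
real multiple of `u`, then `v` is a multiple of `u`. -/
lemma vl_hoelder (harch : VLArchimedean E) {u v : E}
    (htot : ∀ t : ℝ, t • u ≤ v ∨ v ≤ t • u) (hv : 0 ≤ v) (hvu : v ≤ u) (hu : 0 < u) :
    ∃ c : ℝ, 0 ≤ c ∧ v = c • u := by
  set S : Set ℝ := {t | t • u ≤ v} with hS'
  have h0S : (0 : ℝ) ∈ S := by simp [hS', hv]
  have hbdd : BddAbove S := by
    refine ⟨1, fun t ht => ?_⟩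
    by_contra hlt
    push_neg at hlt
    have h1 : t • u ≤ u := le_trans ht hvu
    have h2 : (t - 1) • u ≤ 0 := by
      rw [sub_smul, one_smul]; exact sub_nonpos.mpr h1
    have h3 : u ≤ 0 := by
      have h4 := smul_le_smul_of_nonneg_left h2
        (le_of_lt (inv_pos.mpr (by linarith : (0:ℝ) < t - 1)))
      rw [smul_smul, inv_mul_cancel₀ (by linarith : t - 1 ≠ 0), one_smul, smul_zero] at h4
      exact h4
    exact hu.not_ge h3
  set c := sSup S with hc'
  have hc0 : 0 ≤ c := le_csSup hbdd h0S
  have hcu_le : c • u ≤ v := by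
    have heps : ∀ ε : ℝ, 0 < ε → c • u - v ≤ ε • u := by
      intro ε hε
      obtain ⟨t, htS, htlt⟩ := exists_lt_of_lt_csSup ⟨0, h0S⟩ (by linarith : c - ε < c)
      have h1 : (c - ε) • u ≤ v := le_trans (vl_smul_le_smul htlt.le hu.le) htS
      calc c • u - v ≤ c • u - (c - ε) • u := sub_le_sub_left h1 _
        _ = ε • u := by rw [sub_smul]; abel
    exact sub_nonpos.mp (vl_arch_eps harch hu.le heps)
  have hv_le : v ≤ c • u := by
    have heps : ∀ ε : ℝ, 0 < ε → v - c • u ≤ ε • u := by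
      intro ε hε
      have hnot : (c + ε) ∉ S := fun h => absurd (le_csSup hbdd h) (by linarith)
      rcases htot (c + ε) with h | h
      · exact absurd h hnot
      · calc v - c • u ≤ (c + ε) • u - c • u := sub_le_sub_right h _
          _ = ε • u := by rw [add_smul]; abel
    exact sub_nonpos.mp (vl_arch_eps harch hu.le heps)
  exact ⟨c, hc0, le_antisymm hv_le hcu_le⟩

/-- For a minimal prime `P` and a finite collection of primes distinct from `P`,
there is a nonnegative element outside `P` lying in all of them. -/
lemma vl_exists_u {P : Submodule ℝ E} (hP : IsMinimalPrimeIdeal P)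
    (F : Finset (Submodule ℝ E)) (hF : ∀ Q ∈ F, IsPrimeIdeal Q ∧ Q ≠ P) :
    ∃ u : E, 0 ≤ u ∧ u ∉ P ∧ ∀ Q ∈ F, u ∈ Q := by
  classical
  induction F using Finset.induction_on with
  | empty =>
    have hne : P ≠ ⊤ := hP.1.2.1
    obtain ⟨z, hz⟩ : ∃ z : E, z ∉ P := by
      by_contra h
      push_neg at h
      exact hne (Submodule.eq_top_iff'.mpr h)
    exact ⟨|z|, abs_nonneg z, fun h => hz (hP.1.1.mem_of_abs_mem h), by simp⟩
  | insert _ _ hj ih =>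
    rename_i Q t
    obtain ⟨u, hu0, huP, huQ⟩ := ih fun R hR => hF R (Finset.mem_insert_of_mem hR)
    obtain ⟨hQprime, hQne⟩ := hF Q (Finset.mem_insert_self Q t)
    have hQnleP : ¬ Q ≤ P := fun h => hQne (hP.2 Q hQprime h)
    obtain ⟨z, hzQ, hzP⟩ := SetLike.not_le_iff_exists.mp hQnleP
    have hzQ' : |z| ∈ Q := hQprime.1.abs_mem hzQ
    have hzP' : |z| ∉ P := fun h => hzP (hP.1.1.mem_of_abs_mem h)
    have h0 : (0 : E) ≤ u ⊓ |z| := le_inf hu0 (abs_nonneg z)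
    refine ⟨u ⊓ |z|, h0, vl_inf_not_mem hP.1 huP hzP', ?_⟩
    intro R hR
    rcases Finset.mem_insert.mp hR with rfl | hR
    · apply hQprime.1 _ |z| ?_ hzQ'
      rw [abs_abs, abs_of_nonneg h0]
      exact inf_le_right
    · apply (hF R (Finset.mem_insert_of_mem hR)).1.1 _ u ?_ (huQ R hR)
      rw [abs_of_nonneg h0, abs_of_nonneg hu0]
      exact inf_le_left

end VLAux


theorem statement2 (E : Type*) [Lattice E] [AddCommGroup E] [Module ℝ E]
    [CovariantClass E E (· + ·) (· ≤ ·)] [PosSMulMono ℝ E]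
    (harch : VLArchimedean E)
    (hfin : {P : Submodule ℝ E | IsMinimalPrimeIdeal P}.Finite) :
    FiniteDimensional ℝ E := by
  classical
  set F : Finset (Submodule ℝ E) := hfin.toFinset with hF
  have hmemF : ∀ P : Submodule ℝ E, P ∈ F ↔ IsMinimalPrimeIdeal P := by
    intro P
    simp [hF, Set.Finite.mem_toFinset]
  have hex : ∀ P : Submodule ℝ E, P ∈ F →
      ∃ u : E, 0 ≤ u ∧ u ∉ P ∧ ∀ Q ∈ F, Q ≠ P → u ∈ Q := by
    intro P hP
    have hPmin : IsMinimalPrimeIdeal P := (hmemF P).mp hP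
    have harg : ∀ Q ∈ F.erase P, IsPrimeIdeal Q ∧ Q ≠ P := by
      intro Q hQ
      obtain ⟨hne, hQF⟩ := Finset.mem_erase.mp hQ
      exact ⟨((hmemF Q).mp hQF).1, hne⟩
    obtain ⟨u, h1, h2, h3⟩ := vl_exists_u hPmin (F.erase P) harg
    exact ⟨u, h1, h2, fun Q hQ hne => h3 Q (Finset.mem_erase.mpr ⟨hne, hQ⟩)⟩
  choose! u hu0 huP huQ using hex
  have hdisj : ∀ P ∈ F, ∀ Q ∈ F, P ≠ Q → u P ⊓ u Q = 0 := by
    intro P hP Q hQ hne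
    apply vl_eq_zero_of_mem_all
    intro R hR
    have hRF : R ∈ F := (hmemF R).mpr hR
    have h0 : (0 : E) ≤ u P ⊓ u Q := le_inf (hu0 P hP) (hu0 Q hQ)
    rcases eq_or_ne R P with rfl | hRP
    · apply hR.1.1 _ (u Q) ?_ (huQ Q hQ R hRF hne)
      rw [abs_of_nonneg h0, abs_of_nonneg (hu0 Q hQ)]
      exact inf_le_right
    · apply ((hmemF R).mp hRF).1.1 _ (u P) ?_ (huQ P hP R hRF hRP)
      rw [abs_of_nonneg h0, abs_of_nonneg (hu0 P hP)]
      exact inf_le_left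
  suffices hspan : ∀ z : E, z ∈ Submodule.span ℝ ((F.image u : Finset E) : Set E) by
    have htop : Submodule.span ℝ ((F.image u : Finset E) : Set E) = ⊤ :=
      eq_top_iff.mpr fun z _ => hspan z
    exact Module.finite_def.mpr ⟨F.image u, htop⟩
  have key : ∀ z : E, 0 ≤ z → z ∈ Submodule.span ℝ ((F.image u : Finset E) : Set E) := by
    intro z hz
    set SP : Submodule ℝ E → Set ℝ := fun P => {t : ℝ | t • u P ≤ z} with hSP
    have h0SP : ∀ P, (0 : ℝ) ∈ SP P := by
      intro P
      simp [hSP, hz]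
    have hbddSP : ∀ P ∈ F, BddAbove (SP P) := by
      intro P hP
      by_contra hnb
      have hns : ∀ n : ℕ, n • u P ≤ z := by
        intro n
        obtain ⟨t, htS, htn⟩ := not_bddAbove_iff.mp hnb n
        calc n • u P = (n : ℝ) • u P := (Nat.cast_smul_eq_nsmul ℝ n (u P)).symm
          _ ≤ t • u P := vl_smul_le_smul htn.le (hu0 P hP)
          _ ≤ z := htS
      have hle := harch (u P) z hns
      exact huP P hP ((le_antisymm hle (hu0 P hP)) ▸ P.zero_mem)
    set s : Submodule ℝ E → ℝ := fun P => sSup (SP P) with hs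
    have hs0 : ∀ P ∈ F, 0 ≤ s P := fun P hP => le_csSup (hbddSP P hP) (h0SP P)
    have hlt : ∀ P ∈ F, ∀ t : ℝ, t < s P → t • u P ≤ z := by
      intro P hP t ht
      obtain ⟨t', ht'S, htt'⟩ := exists_lt_of_lt_csSup ⟨0, h0SP P⟩ ht
      exact le_trans (vl_smul_le_smul htt'.le (hu0 P hP)) ht'S
    have hwge : ∀ ε : ℝ, 0 < ε → (∑ P ∈ F, s P • u P) - z ≤ ε • (∑ P ∈ F, u P) := by
      intro ε hε
      set g : Submodule ℝ E → E := fun P => (max (s P - ε) 0) • u P with hg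
      have hgle : ∀ P ∈ F, g P ≤ z := by
        intro P hP
        rcases le_or_gt (s P - ε) 0 with h | h
        · simp only [hg, max_eq_right h, zero_smul]
          exact hz
        · simp only [hg, max_eq_left h.le]
          exact hlt P hP _ (by linarith)
      have hg0 : ∀ P ∈ F, 0 ≤ g P := fun P hP => smul_nonneg (le_max_right _ _) (hu0 P hP)
      have hgd : ∀ P ∈ F, ∀ Q ∈ F, P ≠ Q → g P ⊓ g Q = 0 := by
        intro P hP Q hQ hne
        have h1 : u P ⊓ u Q = 0 := hdisj P hP Q hQ hne
        set C := max (max (s P - ε) 0) (max (s Q - ε) 0) with hC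
        have hC0 : 0 ≤ C := le_trans (le_max_right _ _) (le_max_left _ _)
        apply le_antisymm
        · calc g P ⊓ g Q ≤ (C • u P) ⊓ (C • u Q) :=
              inf_le_inf (vl_smul_le_smul (le_max_left _ _) (hu0 P hP))
                (vl_smul_le_smul (le_max_right _ _) (hu0 Q hQ))
            _ = C • (u P ⊓ u Q) := (vl_smul_inf hC0 _ _).symm
            _ = 0 := by rw [h1, smul_zero]
        · exact le_inf (hg0 P hP) (hg0 Q hQ)
      have hsum : ∑ P ∈ F, g P ≤ z := vl_sum_le hz hg0 hgle hgd
      have hterm : ∀ P ∈ F, s P • u P - g P ≤ ε • u P := by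
        intro P hP
        have hsc : s P - max (s P - ε) 0 ≤ ε := by
          rcases le_or_gt (s P - ε) 0 with h | h
          · rw [max_eq_right h]
            have := hs0 P hP
            linarith
          · rw [max_eq_left h.le]
            linarith
        calc s P • u P - g P = (s P - max (s P - ε) 0) • u P := by rw [hg, sub_smul]
          _ ≤ ε • u P := vl_smul_le_smul hsc (hu0 P hP)
      calc (∑ P ∈ F, s P • u P) - z ≤ (∑ P ∈ F, s P • u P) - ∑ P ∈ F, g P :=
            sub_le_sub_left hsum _
        _ = ∑ P ∈ F, (s P • u P - g P) := by rw [Finset.sum_sub_distrib]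
        _ ≤ ∑ P ∈ F, ε • u P := vl_sum_le_sum hterm
        _ = ε • ∑ P ∈ F, u P := by rw [Finset.smul_sum]
    have hU0 : (0 : E) ≤ ∑ P ∈ F, u P := vl_sum_nonneg fun P hP => hu0 P hP
    have hw0 : (0 : E) ≤ z - ∑ P ∈ F, s P • u P :=
      sub_nonneg.mpr (sub_nonpos.mp (vl_arch_eps harch hU0 hwge))
    set w := z - ∑ P ∈ F, s P • u P with hw
    have hwQ : ∀ Q ∈ F, w ∈ Q := by
      intro Q hQ
      by_contra hwnot
      have hQmin : IsMinimalPrimeIdeal Q := (hmemF Q).mp hQ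
      have hvnot : w ⊓ u Q ∉ Q := vl_inf_not_mem hQmin.1 hwnot (huP Q hQ)
      set v := w ⊓ u Q with hv
      have hv0 : (0 : E) ≤ v := le_inf hw0 (hu0 Q hQ)
      have hvu : v ≤ u Q := inf_le_right
      have huQpos : 0 < u Q :=
        lt_of_le_of_ne (hu0 Q hQ) fun h => huP Q hQ (h ▸ Q.zero_mem)
      have htot : ∀ t : ℝ, t • u Q ≤ v ∨ v ≤ t • u Q := by
        intro t
        set d := v - t • u Q with hd
        have hdmem : ∀ R ∈ F, R ≠ Q → d ∈ R := by
          intro R hR hne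
          have hu_mem : u Q ∈ R := huQ Q hQ R hR hne
          have hv_mem : v ∈ R := by
            apply ((hmemF R).mp hR).1.1 v (u Q) ?_ hu_mem
            rw [abs_of_nonneg hv0, abs_of_nonneg (hu0 Q hQ)]
            exact hvu
          exact Submodule.sub_mem R hv_mem (R.smul_mem t hu_mem)
        have hpn : d⁺ ⊓ d⁻ ∈ Q := by
          rw [posPart_inf_negPart_eq_zero]
          exact Q.zero_mem
        rcases hQmin.1.2.2 _ _ hpn with h | h
        · have hall : ∀ R : Submodule ℝ E, IsMinimalPrimeIdeal R → d⁺ ∈ R := by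
            intro R hRmin
            rcases eq_or_ne R Q with rfl | hne
            · exact h
            · apply hRmin.1.1 (d⁺) d ?_ (hdmem R ((hmemF R).mpr hRmin) hne)
              rw [abs_of_nonneg (posPart_nonneg d), posPart_def]
              exact sup_le (le_abs_self d) (abs_nonneg d)
          have hd0 : d ≤ 0 := posPart_eq_zero.mp (vl_eq_zero_of_mem_all hall)
          right
          exact sub_nonpos.mp hd0
        · have hall : ∀ R : Submodule ℝ E, IsMinimalPrimeIdeal R → d⁻ ∈ R := by
            intro R hRmin
            rcases eq_or_ne R Q with rfl | hne
            · exact h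
            · apply hRmin.1.1 (d⁻) d ?_ (hdmem R ((hmemF R).mpr hRmin) hne)
              rw [abs_of_nonneg (negPart_nonneg d), negPart_def]
              exact sup_le (neg_le_abs d) (abs_nonneg d)
          have hd0 : 0 ≤ d := negPart_eq_zero.mp (vl_eq_zero_of_mem_all hall)
          left
          exact sub_nonneg.mp hd0
      obtain ⟨cc, hcc0, hccv⟩ := vl_hoelder harch htot hv0 hvu huQpos
      have hccne : cc ≠ 0 := by
        rintro rfl
        rw [zero_smul] at hccv
        exact hvnot (hccv ▸ Q.zero_mem)
      have hcle : cc • u Q ≤ w := le_trans (le_of_eq hccv.symm) inf_le_left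
      have hmem : (s Q + cc) ∈ SP Q := by
        show (s Q + cc) • u Q ≤ z
        have h1 : s Q • u Q ≤ ∑ P ∈ F, s P • u P :=
          vl_single_le_sum (fun P hP => smul_nonneg (hs0 P hP) (hu0 P hP)) hQ
        calc (s Q + cc) • u Q = s Q • u Q + cc • u Q := by rw [add_smul]
          _ ≤ (∑ P ∈ F, s P • u P) + w := add_le_add h1 hcle
          _ = z := by rw [hw]; abel
      have hle := le_csSup (hbddSP Q hQ) hmem
      have : 0 < cc := lt_of_le_of_ne hcc0 (Ne.symm hccne)
      linarith
    have hwall : w = 0 :=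
      vl_eq_zero_of_mem_all fun R hR => hwQ R ((hmemF R).mpr hR)
    have hzeq : z = ∑ P ∈ F, s P • u P := by
      have := sub_eq_zero.mp (hw ▸ hwall)
      exact this
    rw [hzeq]
    apply Submodule.sum_mem
    intro P hP
    apply Submodule.smul_mem
    apply Submodule.subset_span
    exact Finset.mem_coe.mpr (Finset.mem_image_of_mem u hP)
  intro z
  have h1 := key (z⁺) (posPart_nonneg z)
  have h2 := key (z⁻) (negPart_nonneg z)
  have hzz : z = z⁺ - z⁻ := (posPart_sub_negPart z).symm
  rw [hzz]
  exact Submodule.sub_mem _ h1 h2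
end

section
/- For an Archimedean vector lattice E the following are equivalent: (i) E is finite-dimensional; (ii) every proper ideal of E is principal; (iii) every prime ideal of E is principal. -/
set_option linter.unusedSectionVars false
set_option linter.unnecessarySimpa false
set_option maxHeartbeats 1000000


set_option linter.unusedSectionVars false
set_option linter.unnecessarySimpa false

section VLaux
variable {E : Type*} [Lattice E] [AddCommGroup E] [Module ℝ E]
  [CovariantClass E E (· + ·) (· ≤ ·)] [PosSMulMono ℝ E]

private lemma abs_eq_zero' {a : E} (h : |a| = 0) : a = 0 := by
  have h1 : a ≤ 0 := le_trans (le_abs_self a) h.le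
  have h2 : -a ≤ 0 := le_trans (neg_le_abs a) h.le
  exact le_antisymm h1 (by simpa using h2)

private lemma smul_le_smul_right' {c d : ℝ} (hcd : c ≤ d) {a : E} (ha : 0 ≤ a) :
    c • a ≤ d • a := by
  have h : 0 ≤ (d - c) • a := smul_nonneg (by linarith) ha
  have h2 := add_le_add_left h (c • a)
  simpa [← add_smul] using h2

private lemma smul_inf' {c : ℝ} (hc : 0 < c) (a b : E) : c • (a ⊓ b) = c • a ⊓ c • b := by
  refine le_antisymm (le_inf (smul_le_smul_of_nonneg_left inf_le_left hc.le)
    (smul_le_smul_of_nonneg_left inf_le_right hc.le)) ?_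
  have h1 : c⁻¹ • (c • a ⊓ c • b) ≤ a ⊓ b := by
    refine le_inf ?_ ?_
    · have h := smul_le_smul_of_nonneg_left (inf_le_left : c • a ⊓ c • b ≤ c • a)
        (inv_nonneg.2 hc.le)
      rwa [inv_smul_smul₀ hc.ne'] at h
    · have h := smul_le_smul_of_nonneg_left (inf_le_right : c • a ⊓ c • b ≤ c • b)
        (inv_nonneg.2 hc.le)
      rwa [inv_smul_smul₀ hc.ne'] at h
  have h2 := smul_le_smul_of_nonneg_left h1 hc.le
  rwa [smul_inv_smul₀ hc.ne'] at h2

private lemma abs_smul' (c : ℝ) (a : E) : |c • a| = |c| • |a| := by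
  have key : ∀ d : ℝ, 0 ≤ d → ∀ x : E, |d • x| ≤ d • |x| := by
    intro d hd x
    refine sup_le ?_ ?_
    · exact smul_le_smul_of_nonneg_left (le_abs_self x) hd
    · rw [← smul_neg]; exact smul_le_smul_of_nonneg_left (neg_le_abs x) hd
  have key2 : ∀ d : ℝ, 0 ≤ d → ∀ x : E, |d • x| = d • |x| := by
    intro d hd x
    rcases eq_or_lt_of_le hd with h | h
    · simp [← h]
    refine le_antisymm (key d hd x) ?_
    have h2 := key d⁻¹ (inv_nonneg.2 hd) (d • x)
    rw [inv_smul_smul₀ h.ne'] at h2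
    have h3 := smul_le_smul_of_nonneg_left h2 hd
    rwa [smul_inv_smul₀ h.ne'] at h3
  rcases le_or_gt 0 c with hc | hc
  · rw [key2 c hc a, abs_of_nonneg hc]
  · have : c • a = (-c) • (-a) := by rw [neg_smul, smul_neg, neg_neg]
    rw [this, key2 (-c) (by linarith) (-a), abs_neg, abs_of_neg hc]

private lemma disj_smul {a b : E} (ha : 0 ≤ a) (hb : 0 ≤ b) (hab : a ⊓ b = 0) {c d : ℝ}
    (hc : 0 ≤ c) (hd : 0 ≤ d) : c • a ⊓ d • b = 0 := by
  set k : ℝ := max c d + 1 with hk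
  have hk0 : 0 < k := by positivity
  have h1 : c • a ≤ k • a := smul_le_smul_right' (by have h := le_max_left c d; linarith) ha
  have h2 : d • b ≤ k • b := smul_le_smul_right' (by have h := le_max_right c d; linarith) hb
  have h3 : c • a ⊓ d • b ≤ k • (a ⊓ b) := by
    rw [smul_inf' hk0]; exact inf_le_inf h1 h2
  have h4 : (0:E) ≤ c • a ⊓ d • b := le_inf (smul_nonneg hc ha) (smul_nonneg hd hb)
  rw [hab, smul_zero] at h3
  exact le_antisymm h3 h4

private lemma sub_inf_self (x a : E) : x - x ⊓ a = (x - a) ⊔ 0 := by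
  have : x - x ⊓ a = x + (-x ⊔ -a) := by rw [← neg_inf, sub_eq_add_neg]
  rw [this, add_sup, add_neg_cancel, sub_eq_add_neg, sup_comm]

private lemma inf_add_le' {u a b : E} (hu : 0 ≤ u) (ha : 0 ≤ a) (hb : 0 ≤ b) :
    u ⊓ (a + b) ≤ u ⊓ a + u ⊓ b := by
  set x := u ⊓ (a + b) with hx
  have hxu : x ≤ u := inf_le_left
  have hxab : x ≤ a + b := inf_le_right
  have h1 : x ⊓ a ≤ u ⊓ a := inf_le_inf_right a hxu
  have h2 : x - x ⊓ a ≤ u ⊓ b := by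
    rw [sub_inf_self]
    refine sup_le (le_inf ?_ ?_) (le_inf hu hb)
    · calc x - a ≤ x - 0 := by exact sub_le_sub_left ha x
        _ = x := sub_zero x
        _ ≤ u := hxu
    · exact sub_le_iff_le_add'.2 hxab
  calc x = x ⊓ a + (x - x ⊓ a) := by rw [add_sub_cancel]
    _ ≤ u ⊓ a + u ⊓ b := add_le_add h1 h2

private lemma inf_shift {p q s t : E} (hp : 0 ≤ p) (hq : 0 ≤ q) :
    (p + s) ⊓ (q + t) ≤ p + q + s ⊓ t := by
  have h1 : (p + s) ⊓ (q + t) ≤ (p + q + s) ⊓ (p + q + t) := by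
    refine inf_le_inf ?_ ?_
    · have : p ≤ p + q := le_add_of_nonneg_right hq
      calc p + s ≤ p + q + s := by exact add_le_add_left this s
        _ = p + q + s := rfl
    · have : q ≤ p + q := le_add_of_nonneg_left hp
      exact add_le_add_left this t
  calc (p + s) ⊓ (q + t) ≤ (p + q + s) ⊓ (p + q + t) := h1
    _ = p + q + s ⊓ t := (add_inf s t (p+q)).symm

private lemma abs_sub_le' (a b : E) : |a - b| ≤ |a| + |b| := by
  rw [sub_eq_add_neg]
  exact (abs_add_le a (-b)).trans (by rw [abs_neg])

private lemma abs_sum_le' {ι : Type*} (s : Finset ι) (f : ι → E) :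
    |∑ i ∈ s, f i| ≤ ∑ i ∈ s, |f i| := by
  classical
  induction s using Finset.induction_on with
  | empty => simp
  | insert _ _ h ih =>
    rw [Finset.sum_insert h, Finset.sum_insert h]
    exact (abs_add_le _ _).trans (add_le_add_right ih _)


private lemma sum_nonneg' {ι : Type*} (s : Finset ι) (f : ι → E) (hf : ∀ i ∈ s, 0 ≤ f i) :
    0 ≤ ∑ i ∈ s, f i := by
  classical
  induction s using Finset.induction_on with
  | empty => simp
  | @insert a s ha ih =>
    rw [Finset.sum_insert ha]
    exact add_nonneg (hf a (Finset.mem_insert_self a s))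
      (ih (fun i hi => hf i (Finset.mem_insert_of_mem hi)))

private lemma sum_le_sum' {ι : Type*} (s : Finset ι) (f g : ι → E) (h : ∀ i ∈ s, f i ≤ g i) :
    ∑ i ∈ s, f i ≤ ∑ i ∈ s, g i := by
  classical
  induction s using Finset.induction_on with
  | empty => simp
  | @insert a s ha ih =>
    rw [Finset.sum_insert ha, Finset.sum_insert ha]
    exact add_le_add (h a (Finset.mem_insert_self a s))
      (ih (fun i hi => h i (Finset.mem_insert_of_mem hi)))

private lemma sum_le_sum_subset' {ι : Type*} {s t : Finset ι} (hst : s ⊆ t) (f : ι → E)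
    (hf : ∀ i ∈ t, 0 ≤ f i) : ∑ i ∈ s, f i ≤ ∑ i ∈ t, f i := by
  classical
  rw [← Finset.sum_sdiff hst]
  exact le_add_of_nonneg_left (sum_nonneg' _ _ (fun i hi => hf i (Finset.mem_sdiff.1 hi).1))

private lemma single_le_sum' {ι : Type*} {s : Finset ι} {i : ι} (hi : i ∈ s) (f : ι → E)
    (hf : ∀ j ∈ s, 0 ≤ f j) : f i ≤ ∑ j ∈ s, f j := by
  classical
  have h : ({i} : Finset ι) ⊆ s := Finset.singleton_subset_iff.2 hi
  simpa using sum_le_sum_subset' h f hf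

private lemma inf_sum_le' {ι : Type*} {u : E} (hu : 0 ≤ u) (s : Finset ι) (f : ι → E)
    (hf : ∀ i ∈ s, 0 ≤ f i) : u ⊓ (∑ i ∈ s, f i) ≤ ∑ i ∈ s, u ⊓ f i := by
  classical
  induction s using Finset.induction_on with
  | empty => simp only [Finset.sum_empty]; exact (inf_eq_right.2 hu).le
  | @insert a s ha ih =>
    rw [Finset.sum_insert ha, Finset.sum_insert ha]
    have h1 : u ⊓ (f a + ∑ i ∈ s, f i) ≤ u ⊓ f a + u ⊓ (∑ i ∈ s, f i) :=
      inf_add_le' hu (hf a (Finset.mem_insert_self a s))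
        (sum_nonneg' _ _ (fun i hi => hf i (Finset.mem_insert_of_mem hi)))
    exact h1.trans (add_le_add_right (ih (fun i hi => hf i (Finset.mem_insert_of_mem hi))) _)

private lemma mem_of_abs_le {I : Submodule ℝ E} (hI : IsIdeal I) {z w : E} (h : |z| ≤ w)
    (hw : w ∈ I) : z ∈ I := by
  have hw0 : 0 ≤ w := le_trans (abs_nonneg z) h
  exact hI z w (by rwa [abs_of_nonneg hw0]) hw

private lemma absMemIff {I : Submodule ℝ E} (hI : IsIdeal I) {z : E} : |z| ∈ I ↔ z ∈ I :=
  ⟨fun h => hI z (|z|) (by rw [abs_abs]) h, fun h => hI (|z|) z (by rw [abs_abs]) h⟩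

private lemma bot_ideal : IsIdeal (⊥ : Submodule ℝ E) := by
  intro x y h hy
  rw [Submodule.mem_bot] at hy ⊢
  subst hy
  simp only [abs_zero] at h
  exact abs_eq_zero' (le_antisymm h (abs_nonneg x))

/-- The ideal generated by an ideal `P` and one further element `d`. -/
private def extendI (P : Submodule ℝ E) (d : E) : Submodule ℝ E where
  carrier := {y | ∃ p ∈ P, 0 ≤ p ∧ ∃ c : ℝ, 0 ≤ c ∧ |y| ≤ p + c • d}
  zero_mem' := ⟨0, P.zero_mem, le_refl 0, 0, le_refl 0, by simp⟩
  add_mem' := by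
    rintro y₁ y₂ ⟨p₁, hp₁, hp₁0, c₁, hc₁, h₁⟩ ⟨p₂, hp₂, hp₂0, c₂, hc₂, h₂⟩
    refine ⟨p₁ + p₂, P.add_mem hp₁ hp₂, add_nonneg hp₁0 hp₂0, c₁ + c₂,
      add_nonneg hc₁ hc₂, ?_⟩
    calc |y₁ + y₂| ≤ |y₁| + |y₂| := abs_add_le _ _
      _ ≤ (p₁ + c₁ • d) + (p₂ + c₂ • d) := add_le_add h₁ h₂
      _ = p₁ + p₂ + (c₁ + c₂) • d := by rw [add_smul]; abel
  smul_mem' := by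
    rintro r y ⟨p, hp, hp0, c, hc, h⟩
    refine ⟨|r| • p, P.smul_mem _ hp, smul_nonneg (abs_nonneg r) hp0, |r| * c,
      mul_nonneg (abs_nonneg r) hc, ?_⟩
    calc |r • y| = |r| • |y| := abs_smul' r y
      _ ≤ |r| • (p + c • d) := smul_le_smul_of_nonneg_left h (abs_nonneg r)
      _ = |r| • p + (|r| * c) • d := by rw [smul_add, smul_smul]

private lemma extendI_ideal (P : Submodule ℝ E) (d : E) : IsIdeal (extendI P d) := by
  rintro x y h ⟨p, hp, hp0, c, hc, hy⟩
  exact ⟨p, hp, hp0, c, hc, le_trans h hy⟩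

private lemma le_extendI {P : Submodule ℝ E} (hP : IsIdeal P) (d : E) : P ≤ extendI P d := by
  intro y hy
  exact ⟨|y|, (absMemIff hP).2 hy, abs_nonneg y, 0, le_refl 0, by simp⟩

private lemma self_mem_extendI (P : Submodule ℝ E) {d : E} (hd : 0 ≤ d) : d ∈ extendI P d :=
  ⟨0, P.zero_mem, le_refl 0, 1, zero_le_one, by rw [abs_of_nonneg hd, zero_add, one_smul]⟩

/-- Key Zorn argument: a prime ideal containing `I` and avoiding the inf-closed set `F`. -/
private lemma exists_prime_avoid (I : Submodule ℝ E) (hI : IsIdeal I) (F : Set E)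
    (hFne : F.Nonempty) (hFinf : ∀ s ∈ F, ∀ t ∈ F, s ⊓ t ∈ F) (hFpos : ∀ s ∈ F, 0 ≤ s)
    (hIF : ∀ s ∈ F, s ∉ I) :
    ∃ P : Submodule ℝ E, IsPrimeIdeal P ∧ I ≤ P ∧ ∀ s ∈ F, s ∉ P := by
  classical
  set S : Set (Submodule ℝ E) := {J | IsIdeal J ∧ I ≤ J ∧ ∀ s ∈ F, s ∉ J} with hSdef
  have hzorn : ∀ c ⊆ S, IsChain (· ≤ ·) c → ∀ y ∈ c, ∃ ub ∈ S, ∀ z ∈ c, z ≤ ub := by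
    intro c hcS hchain y hy
    have hdir : DirectedOn (· ≤ ·) c := hchain.directedOn
    have hmem : ∀ x : E, x ∈ sSup c ↔ ∃ p ∈ c, x ∈ p :=
      fun x => Submodule.mem_sSup_of_directed ⟨y, hy⟩ hdir
    refine ⟨sSup c, ⟨?_, ?_, ?_⟩, fun z hz => le_sSup hz⟩
    · intro x₁ y₁ h h1
      obtain ⟨J, hJc, hJ⟩ := (hmem y₁).1 h1
      exact (hmem x₁).2 ⟨J, hJc, (hcS hJc).1 x₁ y₁ h hJ⟩
    · exact le_trans (hcS hy).2.1 (le_sSup hy)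
    · intro s hs hmem'
      obtain ⟨J, hJc, hJ⟩ := (hmem s).1 hmem'
      exact (hcS hJc).2.2 s hs hJ
  have hIS : I ∈ S := ⟨hI, le_refl I, hIF⟩
  obtain ⟨P, hIP, hPmax⟩ := zorn_le_nonempty₀ S hzorn I hIS
  have hPS : P ∈ S := hPmax.prop
  obtain ⟨hPideal, hPIle, hPavoid⟩ := hPS
  -- extension hits F
  have hit : ∀ d : E, 0 ≤ d → d ∉ P →
      ∃ s ∈ F, ∃ p ∈ P, 0 ≤ p ∧ ∃ cc : ℝ, 0 ≤ cc ∧ s ≤ p + cc • d := by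
    intro d hd0 hdP
    have hJS : extendI P d ∉ S := by
      intro hJS
      have heq : extendI P d = P := hPmax.eq_of_ge hJS (le_extendI hPideal d)
      exact hdP (heq ▸ self_mem_extendI P hd0)
    have hnot : ¬ (∀ s ∈ F, s ∉ extendI P d) := by
      intro hav
      exact hJS ⟨extendI_ideal P d, le_trans hPIle (le_extendI hPideal d), hav⟩
    push_neg at hnot
    obtain ⟨s, hsF, hsJ⟩ := hnot
    obtain ⟨p, hp, hp0, cc, hcc, habs⟩ := hsJ
    rw [abs_of_nonneg (hFpos s hsF)] at habs
    exact ⟨s, hsF, p, hp, hp0, cc, hcc, habs⟩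
  -- primality for disjoint nonnegative pairs
  have key : ∀ a b : E, 0 ≤ a → 0 ≤ b → a ⊓ b = 0 → a ∈ P ∨ b ∈ P := by
    intro a b ha hb hab
    by_contra hcon
    push_neg at hcon
    obtain ⟨haP, hbP⟩ := hcon
    obtain ⟨s₁, hs₁F, p₁, hp₁, hp₁0, c₁, hc₁, h₁⟩ := hit a ha haP
    obtain ⟨s₂, hs₂F, p₂, hp₂, hp₂0, c₂, hc₂, h₂⟩ := hit b hb hbP
    have hsF : s₁ ⊓ s₂ ∈ F := hFinf s₁ hs₁F s₂ hs₂F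
    have hle : s₁ ⊓ s₂ ≤ p₁ + p₂ := by
      calc s₁ ⊓ s₂ ≤ (p₁ + c₁ • a) ⊓ (p₂ + c₂ • b) := inf_le_inf h₁ h₂
        _ ≤ p₁ + p₂ + (c₁ • a) ⊓ (c₂ • b) := inf_shift hp₁0 hp₂0
        _ = p₁ + p₂ := by rw [disj_smul ha hb hab hc₁ hc₂, add_zero]
    have : s₁ ⊓ s₂ ∈ P := by
      refine mem_of_abs_le hPideal ?_ (P.add_mem hp₁ hp₂)
      rwa [abs_of_nonneg (hFpos _ hsF)]
    exact hPavoid _ hsF this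
  -- full primality
  refine ⟨P, ⟨hPideal, ?_, ?_⟩, hPIle, hPavoid⟩
  · intro htop
    obtain ⟨s₀, hs₀⟩ := hFne
    exact hPavoid s₀ hs₀ (htop ▸ Submodule.mem_top)
  · intro x y hxy
    have hab : (x - x ⊓ y) ⊓ (y - x ⊓ y) = 0 := by
      rw [sub_eq_neg_add, sub_eq_neg_add, ← add_inf]
      simp
    have ha : (0:E) ≤ x - x ⊓ y := sub_nonneg.2 inf_le_left
    have hb : (0:E) ≤ y - x ⊓ y := sub_nonneg.2 inf_le_right
    rcases key _ _ ha hb hab with h | h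
    · left
      have := P.add_mem h hxy
      rwa [sub_add_cancel] at this
    · right
      have := P.add_mem h hxy
      rwa [sub_add_cancel] at this
private def IsMinPrime (Q : Submodule ℝ E) : Prop :=
  IsPrimeIdeal Q ∧ ∀ R : Submodule ℝ E, IsPrimeIdeal R → R ≤ Q → R = Q

private lemma chain_sInf_prime (c : Set (Submodule ℝ E)) (hc : IsChain (· ≤ ·) c)
    (hne : c.Nonempty) (hall : ∀ Q ∈ c, IsPrimeIdeal Q) : IsPrimeIdeal (sInf c) := by
  obtain ⟨Q₀, hQ₀⟩ := hne
  refine ⟨?_, ?_, ?_⟩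
  · intro x y h hy
    rw [Submodule.mem_sInf] at hy ⊢
    exact fun Q hQ => (hall Q hQ).1 x y h (hy Q hQ)
  · intro htop
    have h1 : (⊤ : Submodule ℝ E) ≤ Q₀ := htop ▸ sInf_le hQ₀
    exact (hall Q₀ hQ₀).2.1 (top_le_iff.1 h1)
  · intro x y hxy
    by_contra hcon
    push_neg at hcon
    obtain ⟨hx, hy⟩ := hcon
    rw [Submodule.mem_sInf] at hx hy
    push_neg at hx hy
    obtain ⟨Q₁, hQ₁c, hxQ₁⟩ := hx
    obtain ⟨Q₂, hQ₂c, hyQ₂⟩ := hy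
    have hxy₁ : x ⊓ y ∈ Q₁ := (Submodule.mem_sInf.1 hxy) Q₁ hQ₁c
    have hxy₂ : x ⊓ y ∈ Q₂ := (Submodule.mem_sInf.1 hxy) Q₂ hQ₂c
    rcases hc.total hQ₁c hQ₂c with h | h
    · rcases (hall Q₁ hQ₁c).2.2 x y hxy₁ with h' | h'
      · exact hxQ₁ h'
      · exact hyQ₂ (h h')
    · rcases (hall Q₂ hQ₂c).2.2 x y hxy₂ with h' | h'
      · exact hxQ₁ (h h')
      · exact hyQ₂ h'

private lemma exists_minprime_le {P : Submodule ℝ E} (hP : IsPrimeIdeal P) :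
    ∃ Q : Submodule ℝ E, IsMinPrime Q ∧ Q ≤ P := by
  classical
  set S : Set (Submodule ℝ E)ᵒᵈ :=
    {Q | IsPrimeIdeal (OrderDual.ofDual Q) ∧ OrderDual.ofDual Q ≤ P} with hSdef
  have hzorn : ∀ c ⊆ S, IsChain (· ≤ ·) c → ∀ y ∈ c, ∃ ub ∈ S, ∀ z ∈ c, z ≤ ub := by
    intro c hcS hchain y hy
    set c' : Set (Submodule ℝ E) := OrderDual.ofDual '' c with hc'def
    have hc'chain : IsChain (· ≤ ·) c' := by
      rintro a ⟨a', ha', rfl⟩ b ⟨b', hb', rfl⟩ hab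
      rcases hchain ha' hb' (fun h => hab (congrArg OrderDual.ofDual h)) with h | h
      · exact Or.inr h
      · exact Or.inl h
    have hc'ne : c'.Nonempty := ⟨OrderDual.ofDual y, ⟨y, hy, rfl⟩⟩
    have hprime : IsPrimeIdeal (sInf c') := by
      refine chain_sInf_prime c' hc'chain hc'ne ?_
      rintro Q ⟨Q', hQ', rfl⟩
      exact (hcS hQ').1
    refine ⟨OrderDual.toDual (sInf c'), ⟨hprime, ?_⟩, ?_⟩
    · exact le_trans (sInf_le ⟨y, hy, rfl⟩) (hcS hy).2
    · intro z hz
      show sInf c' ≤ OrderDual.ofDual z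
      exact sInf_le ⟨z, hz, rfl⟩
  have hPS : OrderDual.toDual P ∈ S := ⟨hP, le_refl P⟩
  obtain ⟨Q, hPQ, hQmax⟩ := zorn_le_nonempty₀ S hzorn (OrderDual.toDual P) hPS
  have hQS : Q ∈ S := hQmax.prop
  refine ⟨OrderDual.ofDual Q, ⟨hQS.1, ?_⟩, hQS.2⟩
  intro R hR hRQ
  have hRS : OrderDual.toDual R ∈ S := ⟨hR, le_trans hRQ hQS.2⟩
  exact congrArg OrderDual.ofDual (hQmax.eq_of_ge hRS hRQ)

/-- Classical property of minimal primes: every member is disjoint from something outside. -/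
private lemma minprime_disjoint {P : Submodule ℝ E} (hmin : IsMinPrime P) {x : E}
    (hx : x ∈ P) (hx0 : 0 ≤ x) : ∃ y : E, 0 ≤ y ∧ y ≠ 0 ∧ y ∉ P ∧ x ⊓ y = 0 := by
  by_contra hcon
  push_neg at hcon
  -- hcon : ∀ y, 0 ≤ y → y ≠ 0 → y ∉ P → x ⊓ y ≠ 0
  have hPideal := hmin.1.1
  have hmemP : ∀ y : E, 0 ≤ y → y ∉ P → y ≠ 0 := by
    intro y _ hyP h0
    exact hyP (h0 ▸ P.zero_mem)
  set F : Set E := {s | ∃ y : E, 0 ≤ y ∧ y ∉ P ∧ (s = y ∨ s = x ⊓ y)} with hFdef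
  have hy₀ : ∃ y₀ : E, 0 ≤ y₀ ∧ y₀ ∉ P := by
    by_contra hall
    push_neg at hall
    refine hmin.1.2.1 (Submodule.eq_top_iff'.2 (fun z => ?_))
    by_contra hz
    have := hall (|z|) (abs_nonneg z)
    exact hz ((absMemIff hPideal).1 (not_not.1 (fun hne => hne this)))
  obtain ⟨y₀, hy₀0, hy₀P⟩ := hy₀
  have hFne : F.Nonempty := ⟨y₀, y₀, hy₀0, hy₀P, Or.inl rfl⟩
  have hinfP : ∀ y z : E, y ∉ P → z ∉ P → y ⊓ z ∉ P := by
    intro y z hy hz hmem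
    rcases hmin.1.2.2 y z hmem with h | h
    · exact hy h
    · exact hz h
  have hFinf : ∀ s ∈ F, ∀ t ∈ F, s ⊓ t ∈ F := by
    intro s hsF t htF
    obtain ⟨y, hy0, hyP, hs⟩ := hsF
    obtain ⟨z, hz0, hzP, ht⟩ := htF
    have hyz0 : 0 ≤ y ⊓ z := le_inf hy0 hz0
    have hyzP : y ⊓ z ∉ P := hinfP y z hyP hzP
    rcases hs with hs | hs <;> rcases ht with ht | ht
    · exact ⟨y ⊓ z, hyz0, hyzP, Or.inl (by rw [hs, ht])⟩
    · exact ⟨y ⊓ z, hyz0, hyzP, Or.inr (by rw [hs, ht, inf_left_comm])⟩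
    · exact ⟨y ⊓ z, hyz0, hyzP, Or.inr (by rw [hs, ht, inf_assoc])⟩
    · exact ⟨y ⊓ z, hyz0, hyzP, Or.inr (by rw [hs, ht, inf_inf_inf_comm, inf_idem])⟩
  have hFpos : ∀ s ∈ F, 0 ≤ s := by
    rintro s ⟨y, hy0, hyP, hs⟩
    rcases hs with rfl | rfl
    · exact hy0
    · exact le_inf hx0 hy0
  have hFbot : ∀ s ∈ F, s ∉ (⊥ : Submodule ℝ E) := by
    rintro s ⟨y, hy0, hyP, hs⟩ hbot
    rw [Submodule.mem_bot] at hbot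
    rcases hs with rfl | rfl
    · exact hmemP s hy0 hyP hbot
    · exact hcon y hy0 (hmemP y hy0 hyP) hyP hbot
  obtain ⟨J, hJprime, _, hJavoid⟩ := exists_prime_avoid ⊥ bot_ideal F hFne hFinf hFpos hFbot
  have hJP : J ≤ P := by
    intro z hz
    by_contra hzP
    have habs : |z| ∉ P := fun h => hzP ((absMemIff hPideal).1 h)
    exact hJavoid (|z|) ⟨|z|, abs_nonneg z, habs, Or.inl rfl⟩ ((absMemIff hJprime.1).2 hz)
  have hxF : x ∈ F := by
    refine ⟨x + y₀, add_nonneg hx0 hy₀0, fun h => hy₀P ?_, Or.inr ?_⟩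
    · have := P.sub_mem h hx
      rwa [add_sub_cancel_left] at this
    · rw [inf_eq_left.2 (le_add_of_nonneg_right hy₀0)]
  have hxJ : x ∉ J := hJavoid x hxF
  exact hxJ ((hmin.2 J hJprime hJP) ▸ hx)
private lemma le_of_forall_eps (harch : VLArchimedean E) {v w : E} (hw : 0 ≤ w)
    (h : ∀ n : ℕ, v ≤ (1/(n+1) : ℝ) • w) : v ≤ 0 := by
  refine harch v w (fun n => ?_)
  have h1 : (n:ℝ) • v ≤ (n:ℝ) • ((1/(n+1):ℝ) • w) :=
    smul_le_smul_of_nonneg_left (h n) (by positivity)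
  rw [smul_smul] at h1
  have h2 : ((n:ℝ) * (1/(n+1))) • w ≤ (1:ℝ) • w := by
    refine smul_le_smul_right' ?_ hw
    rw [mul_one_div]
    exact div_le_one_of_le₀ (by linarith) (by positivity)
  calc n • v = (n:ℝ) • v := (Nat.cast_smul_eq_nsmul ℝ n v).symm
    _ ≤ (1:ℝ) • w := le_trans h1 h2
    _ = w := one_smul _ _

private lemma csSup_smul_le (harch : VLArchimedean E) {a z : E} (ha : 0 ≤ a) {S : Set ℝ}
    (hne : S.Nonempty) (hbdd : BddAbove S) (hS : ∀ t ∈ S, t • a ≤ z) : (sSup S) • a ≤ z := by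
  rw [← sub_nonpos]
  refine le_of_forall_eps harch ha (fun n => ?_)
  have hlt : sSup S - 1/(n+1) < sSup S := by
    have : (0:ℝ) < 1/(n+1) := by positivity
    linarith
  obtain ⟨t, htS, ht⟩ := exists_lt_of_lt_csSup hne hlt
  have h1 : sSup S • a - z ≤ sSup S • a - t • a := sub_le_sub (le_refl _) (hS t htS)
  rw [← sub_smul] at h1
  exact h1.trans (smul_le_smul_right' (by linarith) ha)

private lemma holder_aux (harch : VLArchimedean E) {y : E} (hy0 : 0 ≤ y)
    (total : ∀ x₁ x₂ : E, 0 ≤ x₁ → x₁ ≤ y → 0 ≤ x₂ → x₂ ≤ y → x₁ ≤ x₂ ∨ x₂ ≤ x₁)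
    {x : E} (hx0 : 0 ≤ x) (hxy : x ≤ y) : ∃ t : ℝ, 0 ≤ t ∧ t ≤ 1 ∧ x = t • y := by
  classical
  set S : Set ℝ := {t | 0 ≤ t ∧ t ≤ 1 ∧ t • y ≤ x} with hSdef
  have h0S : (0:ℝ) ∈ S := ⟨le_refl 0, zero_le_one, by rw [zero_smul]; exact hx0⟩
  have hbdd : BddAbove S := ⟨1, fun t ht => ht.2.1⟩
  set l := sSup S with hldef
  have hl0 : 0 ≤ l := le_csSup hbdd h0S
  have hl1 : l ≤ 1 := csSup_le ⟨0, h0S⟩ (fun t ht => ht.2.1)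
  have hly : l • y ≤ x := csSup_smul_le harch hy0 ⟨0, h0S⟩ hbdd (fun t ht => ht.2.2)
  have hxl : x ≤ l • y := by
    rw [← sub_nonpos]
    refine le_of_forall_eps harch hy0 (fun n => ?_)
    have hpos : (0:ℝ) < 1/(n+1) := by positivity
    have key : x ≤ (l + 1/(n+1)) • y := by
      rcases le_or_gt (l + 1/(n+1)) 1 with h1 | h1
      · have htS : (l + 1/(n+1)) ∉ S := by
          intro hmem
          have := le_csSup hbdd hmem
          linarith
        have h2 : ¬ ((l + 1/(n+1)) • y ≤ x) := fun hle => htS ⟨add_nonneg hl0 hpos.le, h1, hle⟩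
        have h3 : (0:E) ≤ (l + 1/(n+1)) • y := smul_nonneg (add_nonneg hl0 hpos.le) hy0
        have h4 : (l + 1/(n+1)) • y ≤ y := by
          calc (l + 1/(n+1)) • y ≤ (1:ℝ) • y := smul_le_smul_right' h1 hy0
            _ = y := one_smul _ _
        rcases total x ((l + 1/(n+1)) • y) hx0 hxy h3 h4 with h | h
        · exact h
        · exact absurd h h2
      · calc x ≤ y := hxy
          _ = (1:ℝ) • y := (one_smul _ _).symm
          _ ≤ (l + 1/(n+1)) • y := smul_le_smul_right' h1.le hy0
    calc x - l • y ≤ (l + 1/(n+1)) • y - l • y := sub_le_sub_right key _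
      _ = (1/(n+1) : ℝ) • y := by rw [← sub_smul, add_sub_cancel_left]
  exact ⟨l, hl0, hl1, le_antisymm hxl hly⟩

private lemma total_of_atom {a : E} (ha : IsAtomElem a) :
    ∀ x₁ x₂ : E, 0 ≤ x₁ → x₁ ≤ a → 0 ≤ x₂ → x₂ ≤ a → x₁ ≤ x₂ ∨ x₂ ≤ x₁ := by
  intro x₁ x₂ h10 h1a h20 h2a
  have hp : (x₁ - x₂)⁺ ≤ a := by
    refine sup_le ?_ (le_trans h10 h1a)
    calc x₁ - x₂ ≤ x₁ - 0 := sub_le_sub_left h20 x₁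
      _ = x₁ := sub_zero x₁
      _ ≤ a := h1a
  have hn : (x₁ - x₂)⁻ ≤ a := by
    rw [negPart_def]
    refine sup_le ?_ (le_trans h20 h2a)
    calc -(x₁ - x₂) = x₂ - x₁ := by abel
      _ ≤ x₂ - 0 := sub_le_sub_left h10 x₂
      _ = x₂ := sub_zero x₂
      _ ≤ a := h2a
  rcases ha.2 _ _ (posPart_nonneg _) hp (negPart_nonneg _) hn
    (posPart_inf_negPart_eq_zero _) with h | h
  · left
    rw [posPart_eq_zero] at h
    exact sub_nonpos.1 h
  · right
    rw [negPart_eq_zero] at h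
    exact sub_nonneg.1 h

private lemma interval_scalar_of_atom (harch : VLArchimedean E) {a : E} (ha : IsAtomElem a)
    {x : E} (hx0 : 0 ≤ x) (hxa : x ≤ a) : ∃ t : ℝ, 0 ≤ t ∧ t ≤ 1 ∧ x = t • a :=
  holder_aux harch ha.1.le (total_of_atom ha) hx0 hxa

private lemma atom_smul {a : E} (ha : IsAtomElem a) {t : ℝ} (ht : 0 < t) :
    IsAtomElem (t • a) := by
  constructor
  · have h0 : (0:E) ≤ t • a := smul_nonneg ht.le ha.1.le
    have hne : t • a ≠ 0 := fun h => (ne_of_gt ha.1) (by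
      have := congrArg (fun z => t⁻¹ • z) h
      simpa [smul_smul, inv_mul_cancel₀ ht.ne'] using this)
    exact lt_of_le_of_ne h0 (Ne.symm hne)
  · intro x y hx0 hxa hy0 hya hxy
    have hx' : t⁻¹ • x ≤ a := by
      have := smul_le_smul_of_nonneg_left hxa (inv_nonneg.2 ht.le)
      rwa [smul_smul, inv_mul_cancel₀ ht.ne', one_smul] at this
    have hy' : t⁻¹ • y ≤ a := by
      have := smul_le_smul_of_nonneg_left hya (inv_nonneg.2 ht.le)
      rwa [smul_smul, inv_mul_cancel₀ ht.ne', one_smul] at this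
    have hxy' : (t⁻¹ • x) ⊓ (t⁻¹ • y) = 0 := by
      rw [← smul_inf' (inv_pos.2 ht), hxy, smul_zero]
    rcases ha.2 _ _ (smul_nonneg (inv_nonneg.2 ht.le) hx0) hx'
      (smul_nonneg (inv_nonneg.2 ht.le) hy0) hy' hxy' with h | h
    · left
      have := congrArg (fun z => t • z) h
      simpa [smul_smul, mul_inv_cancel₀ ht.ne'] using this
    · right
      have := congrArg (fun z => t • z) h
      simpa [smul_smul, mul_inv_cancel₀ ht.ne'] using this

private lemma atoms_overlap {a b : E} (harch : VLArchimedean E) (ha : IsAtomElem a)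
    (hb : IsAtomElem b) (hab : a ⊓ b ≠ 0) : ∃ γ : ℝ, 0 < γ ∧ b = γ • a := by
  have h0 : (0:E) ≤ a ⊓ b := le_inf ha.1.le hb.1.le
  obtain ⟨t, ht0, _, hta⟩ := interval_scalar_of_atom harch ha h0 inf_le_left
  obtain ⟨s, hs0, _, hsb⟩ := interval_scalar_of_atom harch hb h0 inf_le_right
  have htpos : 0 < t := by
    rcases eq_or_lt_of_le ht0 with h | h
    · exact absurd (by rw [hta, ← h, zero_smul]) hab
    · exact h
  have hspos : 0 < s := by
    rcases eq_or_lt_of_le hs0 with h | h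
    · exact absurd (by rw [hsb, ← h, zero_smul]) hab
    · exact h
  refine ⟨t / s, by positivity, ?_⟩
  have h1 : s • b = t • a := by rw [← hsb, ← hta]
  have := congrArg (fun z => s⁻¹ • z) h1
  simpa [smul_smul, inv_mul_cancel₀ hspos.ne', div_eq_inv_mul] using this

private lemma atom_split (harch : VLArchimedean E) {a : E} (ha : IsAtomElem a) {z : E}
    (hz : 0 ≤ z) : ∃ t : ℝ, 0 ≤ t ∧ t • a ≤ z ∧ (z - t • a) ⊓ a = 0 := by
  classical
  set S : Set ℝ := {t | 0 ≤ t ∧ t • a ≤ z} with hSdef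
  have h0S : (0:ℝ) ∈ S := ⟨le_refl 0, by rw [zero_smul]; exact hz⟩
  have hbdd : BddAbove S := by
    by_contra hb
    rw [not_bddAbove_iff] at hb
    have hna : ∀ n : ℕ, n • a ≤ z := by
      intro n
      obtain ⟨t, htS, htn⟩ := hb n
      calc n • a = (n:ℝ) • a := (Nat.cast_smul_eq_nsmul ℝ n a).symm
        _ ≤ t • a := smul_le_smul_right' htn.le ha.1.le
        _ ≤ z := htS.2
    have h := harch a z hna
    exact absurd (lt_of_lt_of_le ha.1 h) (lt_irrefl 0)
  set l := sSup S with hldef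
  have hl0 : 0 ≤ l := le_csSup hbdd h0S
  have hla : l • a ≤ z := csSup_smul_le harch ha.1.le ⟨0, h0S⟩ hbdd (fun t ht => ht.2)
  refine ⟨l, hl0, hla, ?_⟩
  have hs0 : (0:E) ≤ (z - l • a) ⊓ a := le_inf (sub_nonneg.2 hla) ha.1.le
  obtain ⟨μ, hμ0, _, hμ⟩ := interval_scalar_of_atom harch ha hs0 inf_le_right
  rcases eq_or_lt_of_le hμ0 with h | h
  · rw [hμ, ← h, zero_smul]
  · exfalso
    have hmem : l + μ ∈ S := by
      refine ⟨by linarith, ?_⟩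
      have h1 : μ • a ≤ z - l • a := hμ ▸ inf_le_left
      rw [add_smul]
      calc l • a + μ • a ≤ l • a + (z - l • a) := add_le_add_right h1 _
        _ = z := by abel
    have := le_csSup hbdd hmem
    linarith

private lemma atom_split' (harch : VLArchimedean E) {a : E} (ha : IsAtomElem a) (z : E) :
    ∃ r : ℝ, |z - r • a| ⊓ a = 0 := by
  obtain ⟨t₁, ht₁0, ht₁, hd₁⟩ := atom_split harch ha (posPart_nonneg z)
  obtain ⟨t₂, ht₂0, ht₂, hd₂⟩ := atom_split harch ha (negPart_nonneg z)
  refine ⟨t₁ - t₂, ?_⟩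
  have hzeq : z - (t₁ - t₂) • a = (z⁺ - t₁ • a) - (z⁻ - t₂ • a) := by
    have h : (z⁺ - t₁ • a) - (z⁻ - t₂ • a) = (z⁺ - z⁻) - (t₁ - t₂) • a := by
      rw [sub_smul]; abel
    rw [h, posPart_sub_negPart]
  have habs : |z - (t₁ - t₂) • a| ≤ (z⁺ - t₁ • a) + (z⁻ - t₂ • a) := by
    rw [hzeq]
    refine (abs_sub_le' _ _).trans ?_
    rw [abs_of_nonneg (sub_nonneg.2 ht₁), abs_of_nonneg (sub_nonneg.2 ht₂)]
  have h1 : |z - (t₁ - t₂) • a| ⊓ a ≤ ((z⁺ - t₁ • a) + (z⁻ - t₂ • a)) ⊓ a :=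
    inf_le_inf_right a habs
  have h2 : ((z⁺ - t₁ • a) + (z⁻ - t₂ • a)) ⊓ a ≤ (z⁺ - t₁ • a) ⊓ a + (z⁻ - t₂ • a) ⊓ a := by
    rw [inf_comm, inf_comm (z⁺ - t₁ • a) a, inf_comm (z⁻ - t₂ • a) a]
    exact inf_add_le' ha.1.le (sub_nonneg.2 ht₁) (sub_nonneg.2 ht₂)
  have h3 : |z - (t₁ - t₂) • a| ⊓ a ≤ 0 := by
    calc |z - (t₁ - t₂) • a| ⊓ a ≤ (z⁺ - t₁ • a) ⊓ a + (z⁻ - t₂ • a) ⊓ a := h1.trans h2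
      _ = 0 := by rw [hd₁, hd₂, add_zero]
  exact le_antisymm h3 (le_inf (abs_nonneg _) ha.1.le)
private lemma total_of_primeperp {Q : Submodule ℝ E} (hQ : IsPrimeIdeal Q) {y : E}
    (hchar : ∀ z : E, z ∈ Q ↔ |z| ⊓ y = 0) :
    ∀ x₁ x₂ : E, 0 ≤ x₁ → x₁ ≤ y → 0 ≤ x₂ → x₂ ≤ y → x₁ ≤ x₂ ∨ x₂ ≤ x₁ := by
  intro x₁ x₂ h10 h1a h20 h2a
  set d := x₁ - x₂ with hd
  have hdisj : d⁺ ⊓ d⁻ ∈ Q := by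
    rw [posPart_inf_negPart_eq_zero]
    exact Q.zero_mem
  have hp : d⁺ ≤ x₁ := by
    refine sup_le ?_ h10
    calc x₁ - x₂ ≤ x₁ - 0 := sub_le_sub_left h20 x₁
      _ = x₁ := sub_zero x₁
  have hn : d⁻ ≤ x₂ := by
    rw [negPart_def]
    refine sup_le ?_ h20
    calc -(x₁ - x₂) = x₂ - x₁ := by abel
      _ ≤ x₂ - 0 := sub_le_sub_left h10 x₂
      _ = x₂ := sub_zero x₂
  rcases hQ.2.2 _ _ hdisj with h | h
  · left
    have h0 : d⁺ ⊓ y = 0 := by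
      have := (hchar _).1 h
      rwa [abs_of_nonneg (posPart_nonneg d)] at this
    have : d⁺ = 0 := by
      rw [← inf_eq_left.2 (hp.trans h1a)]
      exact h0
    rw [posPart_eq_zero] at this
    exact sub_nonpos.1 this
  · right
    have h0 : d⁻ ⊓ y = 0 := by
      have := (hchar _).1 h
      rwa [abs_of_nonneg (negPart_nonneg d)] at this
    have : d⁻ = 0 := by
      rw [← inf_eq_left.2 (hn.trans h2a)]
      exact h0
    rw [negPart_eq_zero] at this
    exact sub_nonneg.1 this

/-- A minimal prime ideal (under the principality hypothesis) is the disjoint complement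
of an atom. -/
private lemma minprime_atom (harch : VLArchimedean E)
    (hprin : ∀ P : Submodule ℝ E, IsPrimeIdeal P → IsPrincipalIdeal P)
    {Q : Submodule ℝ E} (hQ : IsMinPrime Q) :
    ∃ y : E, IsAtomElem y ∧ (∀ z : E, z ∈ Q ↔ |z| ⊓ y = 0) := by
  obtain ⟨x₀, hx₀0, hmem⟩ := hprin Q hQ.1
  have hx₀Q : x₀ ∈ Q := (hmem x₀).2 ⟨1, zero_le_one, by rw [abs_of_nonneg hx₀0, one_smul]⟩
  obtain ⟨y, hy0, hyne, hyQ, hxy⟩ := minprime_disjoint hQ hx₀Q hx₀0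
  have hchar : ∀ z : E, z ∈ Q ↔ |z| ⊓ y = 0 := by
    intro z
    constructor
    · intro hz
      obtain ⟨c, hc0, hc⟩ := (hmem z).1 hz
      have h1 : |z| ⊓ y ≤ (c • x₀) ⊓ ((1:ℝ) • y) := by
        rw [one_smul]
        exact inf_le_inf_right y hc
      rw [disj_smul hx₀0 hy0 hxy hc0 zero_le_one] at h1
      exact le_antisymm h1 (le_inf (abs_nonneg z) hy0)
    · intro hz
      have h0 : |z| ⊓ y ∈ Q := hz ▸ Q.zero_mem
      rcases hQ.1.2.2 _ _ h0 with h | h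
      · exact (absMemIff hQ.1.1).1 h
      · exact absurd h hyQ
  have hypos : 0 < y := lt_of_le_of_ne hy0 (Ne.symm hyne)
  refine ⟨y, ⟨hypos, ?_⟩, hchar⟩
  intro x₁ x₂ h10 h1a h20 h2a h12
  obtain ⟨t₁, ht₁0, _, ht₁⟩ := holder_aux harch hy0 (total_of_primeperp hQ.1 hchar) h10 h1a
  obtain ⟨t₂, ht₂0, _, ht₂⟩ := holder_aux harch hy0 (total_of_primeperp hQ.1 hchar) h20 h2a
  rcases le_total t₁ t₂ with h | h
  · left
    have : x₁ ≤ x₂ := by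
      rw [ht₁, ht₂]
      exact smul_le_smul_right' h hy0
    rw [← inf_eq_left.2 this, h12]
  · right
    have : x₂ ≤ x₁ := by
      rw [ht₁, ht₂]
      exact smul_le_smul_right' h hy0
    rw [← inf_eq_left.2 this, inf_comm, h12]

/-- Every nonzero positive element dominates an atom. -/
private lemma exists_atom_below (harch : VLArchimedean E)
    (hprin : ∀ P : Submodule ℝ E, IsPrimeIdeal P → IsPrincipalIdeal P)
    {u : E} (hu0 : 0 ≤ u) (hune : u ≠ 0) : ∃ a : E, IsAtomElem a ∧ a ≤ u := by
  have hubot : ∀ s ∈ ({u} : Set E), s ∉ (⊥ : Submodule ℝ E) := by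
    rintro s rfl hs
    exact hune ((Submodule.mem_bot ℝ).1 hs)
  obtain ⟨P, hP, _, hPu⟩ := exists_prime_avoid ⊥ bot_ideal {u} ⟨u, rfl⟩
    (by rintro s rfl t rfl; simp) (by rintro s rfl; exact hu0) hubot
  obtain ⟨Q, hQmin, hQP⟩ := exists_minprime_le hP
  obtain ⟨y, hyatom, hchar⟩ := minprime_atom harch hprin hQmin
  have huQ : u ∉ Q := fun h => hPu u rfl (hQP h)
  have hne : u ⊓ y ≠ 0 := by
    intro h
    exact huQ ((hchar u).2 (by rwa [abs_of_nonneg hu0]))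
  obtain ⟨t, ht0, _, ht⟩ := interval_scalar_of_atom harch hyatom
    (le_inf hu0 hyatom.1.le) inf_le_right
  have htpos : 0 < t := by
    rcases eq_or_lt_of_le ht0 with h | h
    · exact absurd (by rw [ht, ← h, zero_smul]) hne
    · exact h
  exact ⟨t • y, atom_smul hyatom htpos, by rw [← ht]; exact inf_le_left⟩
/-- The ideal generated by all atoms. -/
private def atomSpanI (E : Type*) [Lattice E] [AddCommGroup E] [Module ℝ E]
    [CovariantClass E E (· + ·) (· ≤ ·)] [PosSMulMono ℝ E] : Submodule ℝ E where
  carrier := {y | ∃ c : ℝ, 0 ≤ c ∧ ∃ s : Finset E, (∀ b ∈ s, IsAtomElem b) ∧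
    |y| ≤ c • ∑ b ∈ s, b}
  zero_mem' := ⟨0, le_refl 0, ∅, by simp, by simp⟩
  add_mem' := by
    classical
    rintro y₁ y₂ ⟨c₁, hc₁, s₁, hs₁, h₁⟩ ⟨c₂, hc₂, s₂, hs₂, h₂⟩
    refine ⟨c₁ + c₂, add_nonneg hc₁ hc₂, s₁ ∪ s₂, ?_, ?_⟩
    · intro b hb
      rcases Finset.mem_union.1 hb with h | h
      · exact hs₁ b h
      · exact hs₂ b h
    · have hpos : ∀ b ∈ s₁ ∪ s₂, (0:E) ≤ b := fun b hb => by
        rcases Finset.mem_union.1 hb with h | h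
        · exact (hs₁ b h).1.le
        · exact (hs₂ b h).1.le
      have hsum : (0:E) ≤ ∑ b ∈ s₁ ∪ s₂, b := sum_nonneg' _ _ hpos
      have hs₁le : ∑ b ∈ s₁, b ≤ ∑ b ∈ s₁ ∪ s₂, b :=
        sum_le_sum_subset' Finset.subset_union_left _ hpos
      have hs₂le : ∑ b ∈ s₂, b ≤ ∑ b ∈ s₁ ∪ s₂, b :=
        sum_le_sum_subset' Finset.subset_union_right _ hpos
      calc |y₁ + y₂| ≤ |y₁| + |y₂| := abs_add_le _ _
        _ ≤ c₁ • ∑ b ∈ s₁, b + c₂ • ∑ b ∈ s₂, b := add_le_add h₁ h₂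
        _ ≤ c₁ • ∑ b ∈ s₁ ∪ s₂, b + c₂ • ∑ b ∈ s₁ ∪ s₂, b :=
          add_le_add (smul_le_smul_of_nonneg_left hs₁le hc₁)
            (smul_le_smul_of_nonneg_left hs₂le hc₂)
        _ = (c₁ + c₂) • ∑ b ∈ s₁ ∪ s₂, b := (add_smul _ _ _).symm
  smul_mem' := by
    rintro r y ⟨c, hc, s, hs, h⟩
    refine ⟨|r| * c, mul_nonneg (abs_nonneg r) hc, s, hs, ?_⟩
    calc |r • y| = |r| • |y| := abs_smul' r y
      _ ≤ |r| • (c • ∑ b ∈ s, b) := smul_le_smul_of_nonneg_left h (abs_nonneg r)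
      _ = (|r| * c) • ∑ b ∈ s, b := smul_smul _ _ _

private lemma atomSpanI_ideal : IsIdeal (atomSpanI E) := by
  rintro x y h ⟨c, hc, s, hs, hy⟩
  exact ⟨c, hc, s, hs, le_trans h hy⟩

private lemma atom_mem_atomSpanI {b : E} (hb : IsAtomElem b) : b ∈ atomSpanI E := by
  refine ⟨1, zero_le_one, {b}, ?_, ?_⟩
  · intro b' hb'
    rwa [Finset.mem_singleton.1 hb']
  · rw [Finset.sum_singleton, one_smul, abs_of_nonneg hb.1.le]

/-- Decomposition along a finite set of atoms. -/
private lemma span_decomp (harch : VLArchimedean E) :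
    ∀ t : Finset E, (∀ b ∈ t, IsAtomElem b) → ∀ z : E, ∃ v : E,
      z - v ∈ Submodule.span ℝ (t : Set E) ∧ ∀ b ∈ t, |v| ⊓ b = 0 := by
  classical
  intro t
  induction t using Finset.induction_on with
  | empty =>
    intro _ z
    exact ⟨z, by simp, by simp⟩
  | @insert b t hbt ih =>
    intro hatoms z
    have hb : IsAtomElem b := hatoms b (Finset.mem_insert_self b t)
    obtain ⟨v, hv1, hv2⟩ := ih (fun b' hb' => hatoms b' (Finset.mem_insert_of_mem hb')) z
    by_cases hd : |v| ⊓ b = 0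
    · refine ⟨v, ?_, ?_⟩
      · exact Submodule.span_mono (by simp [Finset.coe_insert, Set.subset_insert]) hv1
      · intro b' hb'
        rcases Finset.mem_insert.1 hb' with rfl | hb'
        · exact hd
        · exact hv2 b' hb'
    · obtain ⟨r, hr⟩ := atom_split' harch hb v
      refine ⟨v - r • b, ?_, ?_⟩
      · have h1 : z - (v - r • b) = (z - v) + r • b := by abel
        rw [h1]
        refine Submodule.add_mem _ ?_ ?_
        · exact Submodule.span_mono (by simp [Finset.coe_insert, Set.subset_insert]) hv1
        · exact Submodule.smul_mem _ r (Submodule.subset_span (by simp))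
      · intro b' hb'
        rcases Finset.mem_insert.1 hb' with rfl | hb'
        · exact hr
        · -- b ⊓ b' = 0 since b is not parallel to anything in t
          have hb'atom : IsAtomElem b' := hatoms b' (Finset.mem_insert_of_mem hb')
          have hbb' : b ⊓ b' = 0 := by
            by_contra hne
            obtain ⟨γ, hγ, hγeq⟩ := atoms_overlap harch hb'atom hb (by
              rwa [inf_comm] at hne)
            -- b = γ • b'
            have : |v| ⊓ b = 0 := by
              rw [hγeq]
              have := disj_smul (abs_nonneg v) hb'atom.1.le (hv2 b' hb')
                (zero_le_one) hγ.le
              rwa [one_smul] at this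
            exact hd this
          have habs : |v - r • b| ≤ |v| + |r| • b := by
            refine (abs_sub_le' _ _).trans ?_
            rw [abs_smul' r b, abs_of_nonneg hb.1.le]
          have h1 : |v - r • b| ⊓ b' ≤ (|v| + |r| • b) ⊓ b' := inf_le_inf_right b' habs
          have h2 : (|v| + |r| • b) ⊓ b' ≤ |v| ⊓ b' + (|r| • b) ⊓ b' := by
            rw [inf_comm, inf_comm (|v|) b', inf_comm (|r| • b) b']
            exact inf_add_le' hb'atom.1.le (abs_nonneg v)
              (smul_nonneg (abs_nonneg r) hb.1.le)
          have h3 : (|r| • b) ⊓ b' = 0 := by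
            have := disj_smul hb.1.le hb'atom.1.le hbb' (abs_nonneg r) zero_le_one
            rwa [one_smul] at this
          have h4 : |v - r • b| ⊓ b' ≤ 0 := by
            calc |v - r • b| ⊓ b' ≤ |v| ⊓ b' + (|r| • b) ⊓ b' := h1.trans h2
              _ = 0 := by rw [hv2 b' hb', h3, add_zero]
          exact le_antisymm h4 (le_inf (abs_nonneg _) hb'atom.1.le)
private lemma hard_dir (harch : VLArchimedean E)
    (hprin : ∀ P : Submodule ℝ E, IsPrimeIdeal P → IsPrincipalIdeal P) :
    FiniteDimensional ℝ E := by
  classical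
  by_cases htriv : ∀ z : E, z = 0
  · exact ⟨⟨∅, by ext x; simp [htriv x]⟩⟩
  push_neg at htriv
  obtain ⟨z₀, hz₀⟩ := htriv
  have hune : |z₀| ≠ 0 := fun h => hz₀ (abs_eq_zero' h)
  have hbot' : ∀ s ∈ ({|z₀|} : Set E), s ∉ (⊥ : Submodule ℝ E) := by
    rintro s rfl hs
    exact hune ((Submodule.mem_bot ℝ).1 hs)
  obtain ⟨P, hP, _, hPu⟩ := exists_prime_avoid ⊥ bot_ideal {|z₀|} ⟨|z₀|, rfl⟩
    (by rintro s rfl t rfl; simp) (by rintro s rfl; exact abs_nonneg z₀) hbot'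
  obtain ⟨Q, hQmin, _⟩ := exists_minprime_le hP
  obtain ⟨b, hbAtom, hchar⟩ := minprime_atom harch hprin hQmin
  obtain ⟨w, hw0, hwmem⟩ := hprin Q hQmin.1
  -- `b + w` is a strong unit
  have hsu : ∀ z : E, ∃ c : ℝ, 0 ≤ c ∧ |z| ≤ c • (b + w) := by
    intro z
    obtain ⟨t, ht0, hta, hdisj⟩ := atom_split harch hbAtom (abs_nonneg z)
    have hmemQ : |z| - t • b ∈ Q := (hchar _).2 (by
      rw [abs_of_nonneg (sub_nonneg.2 hta)]; exact hdisj)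
    obtain ⟨c, hc0, hcle⟩ := (hwmem _).1 hmemQ
    refine ⟨t + c, add_nonneg ht0 hc0, ?_⟩
    have h1 : |z| - t • b ≤ c • w := le_trans (le_abs_self _) hcle
    calc |z| = t • b + (|z| - t • b) := by abel
      _ ≤ t • b + c • w := add_le_add_right h1 _
      _ ≤ (t + c) • b + (t + c) • w :=
        add_le_add (smul_le_smul_right' (by linarith) hbAtom.1.le)
          (smul_le_smul_right' (by linarith) hw0)
      _ = (t + c) • (b + w) := (smul_add _ _ _).symm
  -- the ideal generated by the atoms is everything
  have hFtop : atomSpanI E = ⊤ := by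
    by_contra hF
    have hex : ∃ v : E, v ∉ atomSpanI E := by
      by_contra hall
      push_neg at hall
      exact hF (Submodule.eq_top_iff'.2 hall)
    obtain ⟨v, hv⟩ := hex
    have hvabs : |v| ∉ atomSpanI E := fun h => hv ((absMemIff atomSpanI_ideal).1 h)
    have hbot2 : ∀ s ∈ ({|v|} : Set E), s ∉ atomSpanI E := by rintro s rfl; exact hvabs
    obtain ⟨P', hP', hFP', hP'v⟩ := exists_prime_avoid (atomSpanI E) atomSpanI_ideal {|v|}
      ⟨|v|, rfl⟩ (by rintro s rfl t rfl; simp) (by rintro s rfl; exact abs_nonneg v) hbot2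
    obtain ⟨Q', hQ'min, hQ'P'⟩ := exists_minprime_le hP'
    obtain ⟨b', hb'Atom, hchar'⟩ := minprime_atom harch hprin hQ'min
    have hb'F : b' ∈ atomSpanI E := atom_mem_atomSpanI hb'Atom
    have hall : ∀ z : E, z ∈ P' := by
      intro z
      obtain ⟨r, hr⟩ := atom_split' harch hb'Atom z
      have h1 : z - r • b' ∈ Q' := (hchar' _).2 hr
      have h2 : z = r • b' + (z - r • b') := by abel
      rw [h2]
      exact P'.add_mem (P'.smul_mem r (hFP' hb'F)) (hQ'P' h1)
    exact hP'v (|v|) rfl (hall _)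
  have heF : b + w ∈ atomSpanI E := hFtop ▸ Submodule.mem_top
  obtain ⟨c₀, hc₀, s, hsAtoms, hle⟩ := heF
  rw [abs_of_nonneg (add_nonneg hbAtom.1.le hw0)] at hle
  -- every element lies in the span of `s`
  have hspan : ∀ z : E, z ∈ Submodule.span ℝ (s : Set E) := by
    intro z
    obtain ⟨v, hv1, hv2⟩ := span_decomp harch s hsAtoms z
    have hv0 : v = 0 := by
      by_contra hvne
      have hvne' : |v| ≠ 0 := fun h => hvne (abs_eq_zero' h)
      obtain ⟨a₀, ha₀Atom, ha₀le⟩ := exists_atom_below harch hprin (abs_nonneg v) hvne'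
      obtain ⟨C, hC0, hCle⟩ := hsu a₀
      rw [abs_of_nonneg ha₀Atom.1.le] at hCle
      have ha₀sum : a₀ ≤ (C * c₀) • ∑ x ∈ s, x := by
        calc a₀ ≤ C • (b + w) := hCle
          _ ≤ C • (c₀ • ∑ x ∈ s, x) := smul_le_smul_of_nonneg_left hle hC0
          _ = (C * c₀) • ∑ x ∈ s, x := smul_smul _ _ _
      have hex' : ∃ b' ∈ s, a₀ ⊓ b' ≠ 0 := by
        by_contra hnone
        push_neg at hnone
        have h1 : a₀ = a₀ ⊓ ((C * c₀) • ∑ x ∈ s, x) := (inf_eq_left.2 ha₀sum).symm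
        have h2 : (C * c₀) • ∑ x ∈ s, x = ∑ x ∈ s, (C * c₀) • x := Finset.smul_sum
        have h3 : a₀ ⊓ (∑ x ∈ s, (C * c₀) • x) ≤ ∑ x ∈ s, a₀ ⊓ ((C * c₀) • x) :=
          inf_sum_le' ha₀Atom.1.le s _
            (fun i hi => smul_nonneg (mul_nonneg hC0 hc₀) (hsAtoms i hi).1.le)
        have h4 : ∀ x ∈ s, a₀ ⊓ ((C * c₀) • x) = 0 := by
          intro x hx
          have := disj_smul ha₀Atom.1.le (hsAtoms x hx).1.le (hnone x hx) zero_le_one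
            (mul_nonneg hC0 hc₀)
          rwa [one_smul] at this
        have h5 : a₀ ≤ 0 := by
          calc a₀ = a₀ ⊓ ((C * c₀) • ∑ x ∈ s, x) := h1
            _ = a₀ ⊓ (∑ x ∈ s, (C * c₀) • x) := by rw [h2]
            _ ≤ ∑ x ∈ s, a₀ ⊓ ((C * c₀) • x) := h3
            _ = 0 := Finset.sum_eq_zero h4
        exact absurd (lt_of_lt_of_le ha₀Atom.1 h5) (lt_irrefl 0)
      obtain ⟨b', hb's, hb'ne⟩ := hex'
      refine hb'ne ?_
      have h1 : a₀ ⊓ b' ≤ |v| ⊓ b' := inf_le_inf_right b' ha₀le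
      rw [hv2 b' hb's] at h1
      exact le_antisymm h1 (le_inf ha₀Atom.1.le (hsAtoms b' hb's).1.le)
    simpa [hv0] using hv1
  exact ⟨⟨s, eq_top_iff.2 (fun z _ => hspan z)⟩⟩

private lemma easy_dir (hfd : FiniteDimensional ℝ E) {I : Submodule ℝ E} (hI : IsIdeal I) :
    IsPrincipalIdeal I := by
  classical
  letI := hfd
  obtain ⟨s, hs⟩ := IsNoetherian.noetherian I
  refine ⟨∑ v ∈ s, |v|, sum_nonneg' _ _ (fun v _ => abs_nonneg v), fun y => ⟨?_, ?_⟩⟩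
  · intro hy
    rw [← hs] at hy
    obtain ⟨f, -, hf⟩ := Submodule.mem_span_finset.1 hy
    refine ⟨∑ v ∈ s, |f v|, Finset.sum_nonneg (fun v _ => abs_nonneg (f v)), ?_⟩
    calc |y| = |∑ v ∈ s, f v • v| := by rw [hf]
      _ ≤ ∑ v ∈ s, |f v • v| := abs_sum_le' s _
      _ = ∑ v ∈ s, |f v| • |v| := Finset.sum_congr rfl (fun v _ => abs_smul' (f v) v)
      _ ≤ ∑ v ∈ s, (∑ u ∈ s, |f u|) • |v| := sum_le_sum' s _ _ (fun v hv =>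
          smul_le_smul_right' (Finset.single_le_sum (f := fun u => |f u|)
            (fun u _ => abs_nonneg (f u)) hv) (abs_nonneg v))
      _ = (∑ u ∈ s, |f u|) • ∑ v ∈ s, |v| := (Finset.smul_sum).symm
  · rintro ⟨c, hc0, hcle⟩
    have hxI : (∑ v ∈ s, |v|) ∈ I := by
      refine Submodule.sum_mem I (fun v hv => ?_)
      have hvI : v ∈ I := hs ▸ Submodule.subset_span (Finset.mem_coe.2 hv)
      exact (absMemIff hI).2 hvI
    exact mem_of_abs_le hI hcle (I.smul_mem c hxI)
end VLaux

theorem statement3 (E : Type*) [Lattice E] [AddCommGroup E] [Module ℝ E]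
    [CovariantClass E E (· + ·) (· ≤ ·)] [PosSMulMono ℝ E]
    (harch : VLArchimedean E) :
    (FiniteDimensional ℝ E ↔
        ∀ I : Submodule ℝ E, IsIdeal I → I ≠ ⊤ → IsPrincipalIdeal I) ∧
    (FiniteDimensional ℝ E ↔
        ∀ P : Submodule ℝ E, IsPrimeIdeal P → IsPrincipalIdeal P) := by
  constructor
  · constructor
    · intro hfd I hI _
      exact easy_dir hfd hI
    · intro h
      exact hard_dir harch (fun P hP => h P hP.1 hP.2.1)
  · constructor
    · intro hfd P hP
      exact easy_dir hfd hP.1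
    · intro h
      exact hard_dir harch h
end
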